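/- arXiv:1705.02374 — 6 statements merged into one kernel-verified Lean document; each statement's English description precedes it below -/
import Mathlib

section
/- Let (X,d) be a nonempty metric space and L⁰_𝓖(X) the set of strongly 𝓖-measurable functions x : Ω → X (mod a.s. equality), i.e. those x that are a.s. pointwise limits of countable simple functions x^n = Σ_k 1_{A^n_k} x^n_k with x^n_k ∈ X and (A^n_k) ∈ Π_𝓖. Define d_{L⁰_𝓖(X)}(x,x̄) := lim_{n→∞} d(x^n, x̄^n), where d(x^n, x̄^n) := Σ_{k,k′} 1_{A^n_k ∩ Ā^n_{k′}} d(x^n_k, x̄^n_{k′}) for approximating simple sequences. Then: (a) d_{L⁰_𝓖(X)}(x,x̄) is a well-defined element of L⁰₊(𝓖) not depending on the choice of approximating sequences (x^n), (x̄^n); and (b) (L⁰_𝓖(X), d_{L⁰_𝓖(X)}) is a 𝓖-conditional metric space, the concatenation of a sequence (x_k) in L⁰_𝓖(X) along (A_k) ∈ Π_𝓖 being the function equal to x_k a.s. on A_k for each k. -/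
open MeasureTheory Filter Topology Set

namespace CondPaper

variable {Ω : Type*}

/-- A countable partition of `Ω` (up to `μ`-null sets) into `G`-measurable sets. -/
def IsCondPartition {_ : MeasurableSpace Ω} (μ : Measure Ω) (G : MeasurableSpace Ω)
    (A : ℕ → Set Ω) : Prop :=
  (∀ k, MeasurableSet[G] (A k)) ∧
    (∀ i j, i ≠ j → μ (A i ∩ A j) = 0) ∧ μ (⋃ k, A k)ᶜ = 0

/-- A `G`-conditional metric on a nonempty set `X` (Definition 2.1 of the paper). -/
structure CondMetric {_ : MeasurableSpace Ω} (μ : Measure Ω) (G : MeasurableSpace Ω)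
    (X : Type*) : Type _ where
  d : X → X → Ω → ℝ
  measurable_d : ∀ x y, Measurable[G] (d x y)
  nonneg : ∀ x y, ∀ᵐ ω ∂μ, 0 ≤ d x y ω
  eq_iff : ∀ x y, (d x y =ᵐ[μ] fun _ => (0 : ℝ)) ↔ x = y
  symm : ∀ x y, d x y =ᵐ[μ] d y x
  triangle : ∀ x y z, ∀ᵐ ω ∂μ, d x z ω ≤ d x y ω + d y z ω
  concat_spec : ∀ (A : ℕ → Set Ω), IsCondPartition μ G A → ∀ x : ℕ → X,
    ∃! x₀ : X, ∀ k, ∀ᵐ ω ∂μ, ω ∈ A k → d x₀ (x k) ω = 0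

namespace CondMetric

variable {m : MeasurableSpace Ω} {μ : Measure Ω} {G : MeasurableSpace Ω} {X Z : Type*}

/-- The concatenation `Σₖ 1_{A k} (x k)` along a partition. -/
noncomputable def concat (D : CondMetric μ G X) (A : ℕ → Set Ω)
    (hA : IsCondPartition μ G A) (x : ℕ → X) : X :=
  (D.concat_spec A hA x).choose

/-- Almost sure convergence `x n → x₀` in a conditional metric space. -/
def TendstoAE (D : CondMetric μ G X) (x : ℕ → X) (x₀ : X) : Prop :=
  ∀ᵐ ω ∂μ, Tendsto (fun n => D.d x₀ (x n) ω) atTop (nhds (0 : ℝ))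

lemma isCondPartition_level {n : Ω → ℕ} (hn : Measurable[G] n) (μ : @Measure Ω m) :
    IsCondPartition μ G fun j => {ω | n ω = j} := by
  refine ⟨fun j => hn (MeasurableSet.singleton j), ?_, ?_⟩
  · intro i j hij
    have h : {ω | n ω = i} ∩ {ω | n ω = j} = (∅ : Set Ω) := by
      ext ω
      simp only [Set.mem_inter_iff, Set.mem_setOf_eq, Set.mem_empty_iff_false, iff_false]
      rintro ⟨h1, h2⟩
      exact hij (h1 ▸ h2 ▸ rfl)
    simp [h]
  · have h : (⋃ j, {ω | n ω = j}) = (Set.univ : Set Ω) := by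
      ext ω; simp
    simp [h]

/-- Given a `G`-measurable index `n : Ω → ℕ`, the element `x_{n}` of the
"measurable subsequence", i.e. the concatenation of `(x j)` along `({n = j})_j`. -/
noncomputable def subseq (D : CondMetric μ G X) (x : ℕ → X) (n : Ω → ℕ)
    (hn : Measurable[G] n) : X :=
  D.concat (fun j => {ω | n ω = j}) (isCondPartition_level hn μ) x

end CondMetric

variable {m : MeasurableSpace Ω} {μ : Measure Ω} {G : MeasurableSpace Ω} {X Z : Type*}

/-- A strictly increasing sequence `n₁ < n₂ < ⋯` of `G`-measurable `ℕ`-valued random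
variables (indexing a measurable subsequence). -/
structure MIdx {_ : MeasurableSpace Ω} (μ : Measure Ω) (G : MeasurableSpace Ω) where
  n : ℕ → Ω → ℕ
  meas : ∀ k, Measurable[G] (n k)
  lt : ∀ k, ∀ᵐ ω ∂μ, n k ω < n (k + 1) ω

/-- A `G`-stable subset: nonempty and closed under countable concatenations. -/
def StableSet (D : CondMetric μ G X) (H : Set X) : Prop :=
  H.Nonempty ∧ ∀ (A : ℕ → Set Ω) (hA : IsCondPartition μ G A) (x : ℕ → X),
    (∀ k, x k ∈ H) → D.concat A hA x ∈ H

/-- A sequentially closed subset of a conditional metric space. -/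
def SeqClosedSet (D : CondMetric μ G X) (H : Set X) : Prop :=
  ∀ (x : ℕ → X) (x₀ : X), (∀ k, x k ∈ H) → D.TendstoAE x x₀ → x₀ ∈ H

/-- Conditional sequential compactness: every sequence has a measurable
subsequence converging a.s. to an element of `K`. -/
def CondSeqCompact (D : CondMetric μ G X) (K : Set X) : Prop :=
  ∀ z : ℕ → X, (∀ k, z k ∈ K) →
    ∃ (N : MIdx μ G) (z₀ : X), z₀ ∈ K ∧
      D.TendstoAE (fun k => D.subseq z (N.n k) (N.meas k)) z₀

/-- Condition (c1): nonempty control sets. -/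
def ControlC1 (Θ : X → Set Z) : Prop := ∀ x, (Θ x).Nonempty

/-- Condition (c2): `𝓕ₜ`-stability of the state-dependent control set. -/
def ControlC2 (DX : CondMetric μ G X) (DZ : CondMetric μ G Z) (Θ : X → Set Z) : Prop :=
  ∀ (A : ℕ → Set Ω) (hA : IsCondPartition μ G A) (x : ℕ → X),
    Θ (DX.concat A hA x) =
      {w | ∃ z : ℕ → Z, (∀ k, z k ∈ Θ (x k)) ∧ w = DZ.concat A hA z}

/-- Condition (c3): conditional sequential compactness of each control set. -/
def ControlC3 (DZ : CondMetric μ G Z) (Θ : X → Set Z) : Prop :=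
  ∀ x, CondSeqCompact DZ (Θ x)

/-- Condition (c4): conditional outer semi-continuity of the control set. -/
def ControlC4 (DX : CondMetric μ G X) (DZ : CondMetric μ G Z) (Θ : X → Set Z) : Prop :=
  ∀ (x : ℕ → X) (x₀ : X), DX.TendstoAE x x₀ → ∀ z : ℕ → Z, (∀ n, z n ∈ Θ (x n)) →
    ∃ (N : MIdx μ G) (z' : ℕ → Z), (∀ k, z' k ∈ Θ x₀) ∧
      ∀ᵐ ω ∂μ, Tendsto
        (fun k => DZ.d (DZ.subseq z (N.n k) (N.meas k)) (z' k) ω) atTop (nhds (0 : ℝ))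

/-- Membership in `L̲⁰(G)`: a `G`-measurable random variable with values in `ℝ ∪ {-∞}`. -/
def InLbar {_ : MeasurableSpace Ω} (μ : Measure Ω) (G : MeasurableSpace Ω)
    (y : Ω → EReal) : Prop :=
  Measurable[G] y ∧ ∀ᵐ ω ∂μ, y ω < ⊤

end CondPaper

namespace CondPaper

/-- A countable `G`-simple function: `x = Σₖ 1_{Aₖ} vₖ` for a countable `G`-measurable
partition `(Aₖ)` and values `vₖ ∈ X`. -/
def IsCountSimple {Ω : Type} {X : Type} {_ : MeasurableSpace Ω} (μ : Measure Ω)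
    (G : MeasurableSpace Ω) (x : Ω → X) : Prop :=
  ∃ (A : ℕ → Set Ω) (v : ℕ → X), IsCondPartition μ G A ∧ ∀ k, ∀ ω ∈ A k, x ω = v k

/-- A strongly `G`-measurable function with values in a metric space `X`: an a.s.
pointwise limit of countable `G`-simple functions. -/
def StronglyMeasurableG {Ω : Type} {X : Type} [MetricSpace X] {_ : MeasurableSpace Ω}
    (μ : Measure Ω) (G : MeasurableSpace Ω) (x : Ω → X) : Prop :=
  ∃ xn : ℕ → Ω → X, (∀ n, IsCountSimple μ G (xn n)) ∧
    ∀ᵐ ω ∂μ, Filter.Tendsto (fun n => dist (x ω) (xn n ω)) Filter.atTop (nhds (0 : ℝ))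

section AuxL0

variable {Ω : Type} {X : Type} [MetricSpace X] {m : MeasurableSpace Ω} {μ : Measure Ω}
  {G : MeasurableSpace Ω}

open Classical in
/-- The least index `k` with `ω ∈ A k` (junk value `0` if none). -/
noncomputable def findIdx (A : ℕ → Set Ω) (ω : Ω) : ℕ :=
  if h : ∃ k, ω ∈ A k then Nat.find h else 0

open Classical in
lemma measurable_findIdx {A : ℕ → Set Ω} (hA : ∀ k, MeasurableSet[G] (A k)) :
    Measurable[G] (findIdx A) := by
  apply measurable_to_countable'
  intro k
  have hset : findIdx A ⁻¹' {k} =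
      (A k ∩ ⋂ j ∈ Finset.range k, (A j)ᶜ) ∪ (if k = 0 then (⋃ j, A j)ᶜ else ∅) := by
    ext ω
    by_cases h : ∃ j, ω ∈ A j
    · have hω : ω ∈ ⋃ j, A j := by obtain ⟨j, hj⟩ := h; exact mem_iUnion.2 ⟨j, hj⟩
      simp only [Set.mem_preimage, Set.mem_singleton_iff, findIdx, dif_pos h,
        Nat.find_eq_iff h, Set.mem_union, Set.mem_inter_iff, Set.mem_iInter,
        Finset.mem_range, Set.mem_compl_iff]
      constructor
      · rintro ⟨h1, h2⟩; exact Or.inl ⟨h1, fun j hj => h2 j hj⟩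
      · rintro (⟨h1, h2⟩ | hbad)
        · exact ⟨h1, fun j hj => h2 j hj⟩
        · exfalso
          by_cases hk : k = 0
          · rw [if_pos hk] at hbad; exact hbad hω
          · rw [if_neg hk] at hbad; exact hbad
    · push_neg at h
      have h' : ¬ ∃ j, ω ∈ A j := by push_neg; exact h
      simp only [Set.mem_preimage, Set.mem_singleton_iff, findIdx, dif_neg h',
        Set.mem_union, Set.mem_inter_iff]
      constructor
      · rintro rfl
        right
        rw [if_pos rfl]
        simp only [Set.mem_compl_iff, Set.mem_iUnion, not_exists]
        exact h
      · rintro (⟨h1, _⟩ | hbad)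
        · exact absurd h1 (h k)
        · by_cases hk : k = 0
          · exact hk.symm
          · simp [hk] at hbad
  rw [hset]
  refine MeasurableSet.union ((hA k).inter ?_) ?_
  · exact MeasurableSet.biInter (Set.to_countable _) fun j _ => (hA j).compl
  · split
    · exact (MeasurableSet.iUnion fun j => hA j).compl
    · exact MeasurableSet.empty

open Classical in
lemma IsCondPartition.exists_idx {A : ℕ → Set Ω} (hA : IsCondPartition μ G A) :
    ∃ n : Ω → ℕ, Measurable[G] n ∧ (∀ᵐ ω ∂μ, ω ∈ A (n ω)) ∧
      (∀ᵐ ω ∂μ, ∀ k, ω ∈ A k → n ω = k) := by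
  obtain ⟨hAm, hdisj, hcov⟩ := hA
  have hcov' : ∀ᵐ ω ∂μ, ω ∈ ⋃ k, A k := by
    rw [ae_iff]
    simpa [Set.compl_def] using hcov
  refine ⟨findIdx A, measurable_findIdx hAm, ?_, ?_⟩
  · filter_upwards [hcov'] with ω hω
    have h : ∃ k, ω ∈ A k := mem_iUnion.1 hω
    simpa only [findIdx, dif_pos h] using Nat.find_spec h
  · have hd : ∀ᵐ ω ∂μ, ∀ i j, i ≠ j → ω ∉ A i ∩ A j := by
      rw [ae_all_iff]
      intro i
      rw [ae_all_iff]
      intro j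
      by_cases hij : i = j
      · exact Eventually.of_forall fun ω h => absurd hij h
      · have := hdisj i j hij
        filter_upwards [measure_eq_zero_iff_ae_notMem.1 this] with ω hω _
        exact hω
    filter_upwards [hd] with ω hω k hk
    have h : ∃ j, ω ∈ A j := ⟨k, hk⟩
    simp only [findIdx, dif_pos h]
    by_contra hne
    exact hω _ _ hne ⟨Nat.find_spec h, hk⟩

lemma isCountSimple_comp {F : Ω → ℕ} (hF : Measurable[G] F) (V : ℕ → X) :
    IsCountSimple μ G fun ω => V (F ω) :=
  ⟨fun k => {ω | F ω = k}, V, CondMetric.isCondPartition_level hF μ,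
    fun k ω hω => congrArg V hω⟩

lemma isCountSimple_rep {x : Ω → X} (h : IsCountSimple μ G x) :
    ∃ (F : Ω → ℕ) (V : ℕ → X), Measurable[G] F ∧ ∀ᵐ ω ∂μ, x ω = V (F ω) := by
  obtain ⟨A, v, hA, hval⟩ := h
  obtain ⟨n, hn, hmem, _⟩ := hA.exists_idx
  exact ⟨n, v, hn, hmem.mono fun ω hω => hval _ ω hω⟩

lemma stronglyMeasurableG_iff {x : Ω → X} :
    StronglyMeasurableG μ G x ↔
      ∃ (F : ℕ → Ω → ℕ) (V : ℕ → ℕ → X), (∀ n, Measurable[G] (F n)) ∧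
        ∀ᵐ ω ∂μ, Tendsto (fun n => dist (x ω) (V n (F n ω))) atTop (𝓝 0) := by
  constructor
  · rintro ⟨xn, hs, hconv⟩
    choose F V hF hae using fun n => isCountSimple_rep (hs n)
    refine ⟨F, V, hF, ?_⟩
    have hall : ∀ᵐ ω ∂μ, ∀ n, xn n ω = V n (F n ω) := ae_all_iff.2 hae
    filter_upwards [hall, hconv] with ω h1 h2
    have he : (fun n => dist (x ω) (V n (F n ω))) = fun n => dist (x ω) (xn n ω) :=
      funext fun n => by rw [h1 n]
    rw [he]; exact h2
  · rintro ⟨F, V, hF, hconv⟩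
    exact ⟨fun n ω => V n (F n ω), fun n => isCountSimple_comp (hF n) (V n), hconv⟩

lemma tendsto_dist_of_tendsto {a b : X} {f g : ℕ → X}
    (hf : Tendsto (fun n => dist a (f n)) atTop (𝓝 0))
    (hg : Tendsto (fun n => dist b (g n)) atTop (𝓝 0)) :
    Tendsto (fun n => dist (f n) (g n)) atTop (𝓝 (dist a b)) := by
  rw [tendsto_iff_dist_tendsto_zero]
  have hb : Tendsto (fun n => dist a (f n) + dist b (g n)) atTop (𝓝 0) := by
    simpa using hf.add hg
  refine squeeze_zero (fun n => dist_nonneg) (fun n => ?_) hb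
  calc dist (dist (f n) (g n)) (dist a b) ≤ dist (f n) a + dist (g n) b :=
        dist_dist_dist_le _ _ _ _
    _ = dist a (f n) + dist b (g n) := by rw [dist_comm (f n) a, dist_comm (g n) b]

lemma measurable_natPair {F E : Ω → ℕ} (hF : Measurable[G] F) (hE : Measurable[G] E) :
    Measurable[G] fun ω => Nat.pair (F ω) (E ω) := by
  apply measurable_to_countable'
  intro c
  have hset : (fun ω => Nat.pair (F ω) (E ω)) ⁻¹' {c} =
      F ⁻¹' {(Nat.unpair c).1} ∩ E ⁻¹' {(Nat.unpair c).2} := by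
    ext ω
    simp only [Set.mem_preimage, Set.mem_singleton_iff, Set.mem_inter_iff]
    constructor
    · rintro rfl; simp [Nat.unpair_pair]
    · rintro ⟨h1, h2⟩; rw [h1, h2, Nat.pair_unpair]
  rw [hset]
  exact (hF (measurableSet_singleton _)).inter (hE (measurableSet_singleton _))

lemma exists_measurable_dist {x y : Ω → X} (hx : StronglyMeasurableG μ G x)
    (hy : StronglyMeasurableG μ G y) :
    ∃ h : Ω → ℝ, Measurable[G] h ∧ (∀ ω, 0 ≤ h ω) ∧
      h =ᵐ[μ] fun ω => dist (x ω) (y ω) := by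
  obtain ⟨F, V, hF, hxc⟩ := stronglyMeasurableG_iff.1 hx
  obtain ⟨E, W, hE, hyc⟩ := stronglyMeasurableG_iff.1 hy
  refine ⟨fun ω => (limsup (fun n => ENNReal.ofReal
      (dist (V n (F n ω)) (W n (E n ω)))) atTop).toReal, ?_,
      fun ω => ENNReal.toReal_nonneg, ?_⟩
  · apply ENNReal.measurable_toReal.comp
    apply Measurable.limsup
    intro n
    have he : (fun ω => ENNReal.ofReal (dist (V n (F n ω)) (W n (E n ω)))) =
        (fun c : ℕ => ENNReal.ofReal (dist (V n (Nat.unpair c).1) (W n (Nat.unpair c).2))) ∘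
          fun ω => Nat.pair (F n ω) (E n ω) := by
      funext ω; simp [Function.comp, Nat.unpair_pair]
    rw [he]
    exact measurable_from_top.comp (measurable_natPair (hF n) (hE n))
  · filter_upwards [hxc, hyc] with ω h1 h2
    have hd := tendsto_dist_of_tendsto h1 h2
    have hl := (ENNReal.tendsto_ofReal hd).limsup_eq
    simp only [hl, ENNReal.toReal_ofReal dist_nonneg]

lemma exists_glue {A : ℕ → Set Ω} (hA : IsCondPartition μ G A) (xk : ℕ → Ω → X)
    (hxk : ∀ k, StronglyMeasurableG μ G (xk k)) :
    ∃ g : Ω → X, StronglyMeasurableG μ G g ∧ ∀ k, ∀ᵐ ω ∂μ, ω ∈ A k → g ω = xk k ω := by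
  obtain ⟨nI, hnI, hmem, huniq⟩ := hA.exists_idx
  choose F V hF hconv using fun k => stronglyMeasurableG_iff.1 (hxk k)
  refine ⟨fun ω => xk (nI ω) ω, ?_, ?_⟩
  · rw [stronglyMeasurableG_iff]
    refine ⟨fun n ω => Nat.pair (nI ω) (F (nI ω) n ω),
      fun n c => V (Nat.unpair c).1 n (Nat.unpair c).2, ?_, ?_⟩
    · intro n
      apply measurable_to_countable'
      intro c
      have hset : (fun ω => Nat.pair (nI ω) (F (nI ω) n ω)) ⁻¹' {c} =
          nI ⁻¹' {(Nat.unpair c).1} ∩ (F (Nat.unpair c).1 n) ⁻¹' {(Nat.unpair c).2} := by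
        ext ω
        simp only [Set.mem_preimage, Set.mem_singleton_iff, Set.mem_inter_iff]
        constructor
        · rintro rfl; simp [Nat.unpair_pair]
        · rintro ⟨h1, h2⟩
          rw [h1, h2]
          exact Nat.pair_unpair c
      rw [hset]
      exact (hnI (measurableSet_singleton _)).inter ((hF _ n) (measurableSet_singleton _))
    · have hall : ∀ᵐ ω ∂μ, ∀ k,
          Tendsto (fun n => dist (xk k ω) (V k n (F k n ω))) atTop (𝓝 0) :=
        ae_all_iff.2 hconv
      filter_upwards [hall] with ω hω
      simpa only [Nat.unpair_pair] using hω (nI ω)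
  · intro k
    filter_upwards [huniq] with ω hω hk
    rw [hω k hk]


/-- The setoid of a.e. equality on strongly `G`-measurable functions. -/
def L0Setoid (μ : Measure Ω) (G : MeasurableSpace Ω) (X : Type) [MetricSpace X] :
    Setoid {x : Ω → X // StronglyMeasurableG μ G x} :=
  ⟨fun x y => x.1 =ᵐ[μ] y.1,
    ⟨fun _ => Filter.EventuallyEq.refl _ _, fun h => h.symm, fun h1 h2 => h1.trans h2⟩⟩

/-- A chosen `G`-measurable nonnegative version of `dist (x ·) (y ·)`. -/
noncomputable def dS (x y : {x : Ω → X // StronglyMeasurableG μ G x}) : Ω → ℝ :=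
  (exists_measurable_dist x.2 y.2).choose

lemma dS_meas (x y : {x : Ω → X // StronglyMeasurableG μ G x}) :
    Measurable[G] (dS x y) := (exists_measurable_dist x.2 y.2).choose_spec.1

lemma dS_nonneg (x y : {x : Ω → X // StronglyMeasurableG μ G x}) :
    ∀ ω, 0 ≤ dS x y ω := (exists_measurable_dist x.2 y.2).choose_spec.2.1

lemma dS_ae (x y : {x : Ω → X // StronglyMeasurableG μ G x}) :
    dS x y =ᵐ[μ] fun ω => dist (x.1 ω) (y.1 ω) :=
  (exists_measurable_dist x.2 y.2).choose_spec.2.2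

lemma dist_ae_congr {x x' y y' : Ω → X} (hx : x =ᵐ[μ] x') (hy : y =ᵐ[μ] y') :
    (fun ω => dist (x ω) (y ω)) =ᵐ[μ] fun ω => dist (x' ω) (y' ω) := by
  filter_upwards [hx, hy] with ω h1 h2
  rw [h1, h2]

/-- The conditional metric on the quotient. -/
noncomputable def dQ (a b : Quotient (L0Setoid μ G X)) : Ω → ℝ := dS a.out b.out

lemma out_ae (x : {x : Ω → X // StronglyMeasurableG μ G x}) :
    ((Quotient.mk (L0Setoid μ G X) x).out).1 =ᵐ[μ] x.1 :=
  Quotient.mk_out (s := L0Setoid μ G X) x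

lemma dQ_ae (a b : Quotient (L0Setoid μ G X)) :
    dQ a b =ᵐ[μ] fun ω => dist (a.out.1 ω) (b.out.1 ω) := dS_ae _ _

lemma dQ_mk_ae (x y : {x : Ω → X // StronglyMeasurableG μ G x}) :
    dQ (Quotient.mk (L0Setoid μ G X) x) (Quotient.mk (L0Setoid μ G X) y) =ᵐ[μ]
      fun ω => dist (x.1 ω) (y.1 ω) :=
  (dQ_ae _ _).trans (dist_ae_congr (out_ae x) (out_ae y))

lemma ae_mem_iUnion {A : ℕ → Set Ω} (hA : IsCondPartition μ G A) :
    ∀ᵐ ω ∂μ, ω ∈ ⋃ k, A k := by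
  rw [ae_iff]
  simpa [Set.compl_def] using hA.2.2

/-- `L⁰_𝓖(X)` as a conditional metric space. -/
noncomputable def L0Metric (μ : Measure Ω) (G : MeasurableSpace Ω) (X : Type)
    [MetricSpace X] : CondMetric μ G (Quotient (L0Setoid μ G X)) where
  d := dQ
  measurable_d _ _ := dS_meas _ _
  nonneg _ _ := Eventually.of_forall (dS_nonneg _ _)
  eq_iff a b := by
    rw [← Quotient.out_equiv_out (x := a) (y := b)]
    constructor
    · intro h
      have h2 : (fun ω => dist (a.out.1 ω) (b.out.1 ω)) =ᵐ[μ] fun _ => (0 : ℝ) :=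
        (dQ_ae a b).symm.trans h
      show a.out.1 =ᵐ[μ] b.out.1
      filter_upwards [h2] with ω hω
      exact dist_eq_zero.1 hω
    · intro h
      have h2 : (fun ω => dist (a.out.1 ω) (b.out.1 ω)) =ᵐ[μ] fun _ => (0 : ℝ) := by
        filter_upwards [h] with ω hω
        simp [hω]
      exact (dQ_ae a b).trans h2
  symm a b := by
    refine (dQ_ae a b).trans (.trans ?_ (dQ_ae b a).symm)
    exact Eventually.of_forall fun ω => dist_comm _ _
  triangle a b c := by
    filter_upwards [dQ_ae a c, dQ_ae a b, dQ_ae b c] with ω h1 h2 h3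
    rw [h1, h2, h3]
    exact dist_triangle _ _ _
  concat_spec A hA x := by
    obtain ⟨g, hg, hglue⟩ := exists_glue hA (fun k => (x k).out.1) (fun k => (x k).out.2)
    set x₀ : Quotient (L0Setoid μ G X) := Quotient.mk _ ⟨g, hg⟩ with hx₀
    have hQ : ∀ b : Quotient (L0Setoid μ G X),
        dQ x₀ b =ᵐ[μ] fun ω => dist (g ω) (b.out.1 ω) :=
      fun b => (dQ_ae x₀ b).trans (dist_ae_congr (out_ae ⟨g, hg⟩) (EventuallyEq.refl _ _))
    have hP : ∀ k, ∀ᵐ ω ∂μ, ω ∈ A k → dQ x₀ (x k) ω = 0 := by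
      intro k
      filter_upwards [hglue k, hQ (x k)] with ω h1 h2 hk
      rw [h2, h1 hk, dist_self]
    refine ⟨x₀, hP, ?_⟩
    intro y hy
    rw [← Quotient.out_equiv_out (x := y) (y := x₀)]
    show y.out.1 =ᵐ[μ] x₀.out.1
    have hy' : ∀ᵐ ω ∂μ, ∀ k, ω ∈ A k → dist (y.out.1 ω) ((x k).out.1 ω) = 0 := by
      rw [ae_all_iff]
      intro k
      filter_upwards [hy k, dQ_ae y (x k)] with ω h1 h2 hk
      rw [← h2]
      exact h1 hk
    have hx' : ∀ᵐ ω ∂μ, ∀ k, ω ∈ A k → dist (x₀.out.1 ω) ((x k).out.1 ω) = 0 := by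
      rw [ae_all_iff]
      intro k
      filter_upwards [hP k, dQ_ae x₀ (x k)] with ω h1 h2 hk
      rw [← h2]
      exact h1 hk
    filter_upwards [hy', hx', ae_mem_iUnion hA] with ω h1 h2 hc
    obtain ⟨k, hk⟩ := mem_iUnion.1 hc
    rw [dist_eq_zero.1 (h1 k hk), dist_eq_zero.1 (h2 k hk)]

end AuxL0

/-- **Example 2.6.1 (the space `L⁰_𝓖(X)`).** For a nonempty metric space `(X, dist)`,
(a) for strongly `G`-measurable `x, x̄` and any approximating simple sequences
`(xⁿ), (x̄ⁿ)` the distances `dist(xⁿ, x̄ⁿ)` converge a.s. (to `dist(x, x̄)`, which in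
particular does not depend on the approximating sequences and has a `G`-measurable
nonnegative version, i.e. lies in `L⁰₊(𝓖)`); and (b) `L⁰_𝓖(X)` (strongly `G`-measurable
functions mod a.s. equality) with this metric is a `𝓖`-conditional metric space, whose
concatenations are given by a.e. gluing. -/
theorem L0_of_metric_condMetric {Ω : Type} {X : Type} [MetricSpace X] [Nonempty X]
    {m : MeasurableSpace Ω} {μ : Measure Ω} [IsProbabilityMeasure μ]
    {G : MeasurableSpace Ω} (hG : G ≤ m) :
    -- (a) well-definedness of the extended metric
    (∀ x y : Ω → X, StronglyMeasurableG μ G x → StronglyMeasurableG μ G y →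
      (∀ (xn yn : ℕ → Ω → X), (∀ n, IsCountSimple μ G (xn n)) →
        (∀ n, IsCountSimple μ G (yn n)) →
        (∀ᵐ ω ∂μ, Filter.Tendsto (fun n => dist (x ω) (xn n ω)) Filter.atTop (nhds 0)) →
        (∀ᵐ ω ∂μ, Filter.Tendsto (fun n => dist (y ω) (yn n ω)) Filter.atTop (nhds 0)) →
        ∀ᵐ ω ∂μ, Filter.Tendsto (fun n => dist (xn n ω) (yn n ω)) Filter.atTop
          (nhds (dist (x ω) (y ω)))) ∧
      ∃ h : Ω → ℝ, Measurable[G] h ∧ (∀ ω, 0 ≤ h ω) ∧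
        h =ᵐ[μ] fun ω => dist (x ω) (y ω)) ∧
    -- (b) L⁰_𝓖(X) is a 𝓖-conditional metric space
    (∃ (Xq : Type) (q : {x : Ω → X // StronglyMeasurableG μ G x} → Xq)
      (D : CondMetric μ G Xq),
      Function.Surjective q ∧
      (∀ x y, q x = q y ↔ x.1 =ᵐ[μ] y.1) ∧
      (∀ x y, D.d (q x) (q y) =ᵐ[μ] fun ω => dist (x.1 ω) (y.1 ω)) ∧
      ∀ (A : ℕ → Set Ω) (hA : IsCondPartition μ G A)
        (xk : ℕ → {x : Ω → X // StronglyMeasurableG μ G x}),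
        (∃ x₀ : {x : Ω → X // StronglyMeasurableG μ G x},
          ∀ k, ∀ᵐ ω ∂μ, ω ∈ A k → x₀.1 ω = (xk k).1 ω) ∧
        ∀ x₀ : {x : Ω → X // StronglyMeasurableG μ G x},
          (∀ k, ∀ᵐ ω ∂μ, ω ∈ A k → x₀.1 ω = (xk k).1 ω) →
          D.concat A hA (fun k => q (xk k)) = q x₀) := by
  constructor
  · intro x y hx hy
    constructor
    · intro xn yn _ _ hxc hyc
      filter_upwards [hxc, hyc] with ω h1 h2
      exact tendsto_dist_of_tendsto h1 h2
    · exact exists_measurable_dist hx hy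
  · refine ⟨Quotient (L0Setoid μ G X), Quotient.mk (L0Setoid μ G X), L0Metric μ G X,
      fun a => ⟨a.out, Quotient.out_eq a⟩, fun x y => Quotient.eq (r := L0Setoid μ G X),
      fun x y => dQ_mk_ae x y, ?_⟩
    intro A hA xk
    constructor
    · obtain ⟨g, hg, hglue⟩ := exists_glue hA (fun k => (xk k).1) (fun k => (xk k).2)
      exact ⟨⟨g, hg⟩, hglue⟩
    · intro x₀ hx₀
      have hspec := ((L0Metric μ G X).concat_spec A hA
        (fun k => Quotient.mk (L0Setoid μ G X) (xk k))).choose_spec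
      have hP : ∀ k, ∀ᵐ ω ∂μ, ω ∈ A k →
          (L0Metric μ G X).d (Quotient.mk (L0Setoid μ G X) x₀)
            (Quotient.mk (L0Setoid μ G X) (xk k)) ω = 0 := by
        intro k
        filter_upwards [hx₀ k, dQ_mk_ae x₀ (xk k)] with ω h1 h2 hk
        show dQ _ _ ω = 0
        rw [h2, h1 hk, dist_self]
      exact (hspec.2 _ hP).symm

end CondPaper
end

section
/- For every n = Σ_k 1_{A_k} n_k ∈ L⁰_t(ℕ) (with n_k ∈ ℕ and (A_k) ∈ Π_{𝓕_t}), the conditional Euclidean space with measurable dimension n, namely L⁰_t(ℝ)^n := {Σ_k 1_{A_k} x_k : x_k ∈ L⁰_t(ℝ^{n_k}) for all k} with d_{L⁰_t(ℝ)^n}(x,x̄) := Σ_k 1_{A_k} d_{L⁰_t(ℝ^{n_k})}(x_k, x̄_k), is an 𝓕_t-conditional metric space (in particular, d_{L⁰_t(ℝ)^n} is well defined and satisfies the concatenation property). -/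
open MeasureTheory Filter Topology Set

namespace CondPaper

/-- Membership in the conditional Euclidean space `L⁰ₜ(ℝ)ⁿ` of measurable dimension
`n : Ω → ℕ`: componentwise `G`-measurable functions `f` with `f ω ∈ ℝ^{n ω} × {0}`,
i.e. vanishing components from index `n ω` on. (On each set `{n = nₖ}` such an `f` is
exactly an element of `L⁰ₜ(ℝ^{nₖ})`.) -/
def MemCondRn {Ω : Type} (G : MeasurableSpace Ω) (n : Ω → ℕ) (f : Ω → ℕ → ℝ) : Prop :=
  (∀ j, Measurable[G] fun ω => f ω j) ∧ ∀ ω, ∀ j, n ω ≤ j → f ω j = 0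


/-! Represent an element of `L⁰ₜ(ℝ)ⁿ` by a `G`-measurable `f : Ω → ℕ → ℝ` vanishing from index
`n ω` on, taken modulo a.e. equality. At each `ω` the distance is the Euclidean distance in
`ℝ^{n ω}`, so the metric axioms hold pointwise; computing it on the representatives chosen by
`Quotient.out` makes it an honest `G`-measurable function that is a.e. independent of the
representatives. The concatenation of `(fₖ)` along `(Aₖ)` is the pointwise gluing
`ω ↦ f_{ι ω} ω`, where `ι` is a `G`-measurable index equal to `k` a.e. on `Aₖ`; it is unique
because the `Aₖ` cover `Ω` up to a null set. -/

lemma CondMetric.concat_eq {Ω X : Type*} {m : MeasurableSpace Ω} {μ : Measure Ω}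
    {G : MeasurableSpace Ω} (D : CondMetric μ G X) {A : ℕ → Set Ω} (hA : IsCondPartition μ G A)
    {x : ℕ → X} {x₀ : X} (hx₀ : ∀ k, ∀ᵐ ω ∂μ, ω ∈ A k → D.d x₀ (x k) ω = 0) :
    D.concat A hA x = x₀ :=
  (D.concat_spec A hA x).unique (D.concat_spec A hA x).choose_spec.1 hx₀

lemma measurable_apply_index {α β : Type*} {G : MeasurableSpace α} [MeasurableSpace β]
    {h : ℕ → α → β} (hh : ∀ k, Measurable[G] (h k)) {ι : α → ℕ} (hι : Measurable[G] ι) :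
    Measurable[G] fun a => h (ι a) a :=
  (measurable_from_prod_countable_left (f := fun p : α × ℕ => h p.2 p.1) hh).comp
    (measurable_id.prodMk hι)

namespace IsCondPartition

variable {Ω : Type*} {m : MeasurableSpace Ω} {μ : Measure Ω} {G : MeasurableSpace Ω}
  {A : ℕ → Set Ω}

lemma ae_exists_mem (hA : IsCondPartition μ G A) : ∀ᵐ ω ∂μ, ∃ k, ω ∈ A k := by
  filter_upwards [measure_eq_zero_iff_ae_notMem.1 hA.2.2] with ω hω
  simpa using hω

lemma ae_eq_of_mem (hA : IsCondPartition μ G A) :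
    ∀ᵐ ω ∂μ, ∀ i j, ω ∈ A i → ω ∈ A j → i = j := by
  simp only [ae_all_iff]
  intro i j
  by_cases hij : i = j
  · exact Eventually.of_forall fun _ _ _ => hij
  · filter_upwards [measure_eq_zero_iff_ae_notMem.1 (hA.2.1 i j hij)] with ω hω hi hj
    exact absurd ⟨hi, hj⟩ hω

lemma ae_of_forall_ae_mem (hA : IsCondPartition μ G A) {p : Ω → Prop}
    (hp : ∀ k, ∀ᵐ ω ∂μ, ω ∈ A k → p ω) : ∀ᵐ ω ∂μ, p ω := by
  filter_upwards [ae_all_iff.2 hp, hA.ae_exists_mem] with ω hω ⟨k, hk⟩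
  exact hω k hk

/-- The first `k` with `ω ∈ A k`, where `0` serves for the (null) set of `ω` outside all `A k`. -/
lemma exists_measurable_index (hA : IsCondPartition μ G A) :
    ∃ ι : Ω → ℕ, Measurable[G] ι ∧ ∀ k, ∀ᵐ ω ∂μ, ω ∈ A k → ι ω = k := by
  classical
  have hcover : ∀ ω, ∃ k, ω ∈ A k ∨ ω ∉ ⋃ i, A i := fun ω =>
    (em (ω ∈ ⋃ i, A i)).elim (fun h => (mem_iUnion.1 h).imp fun _ => Or.inl) fun h => ⟨0, .inr h⟩
  refine ⟨fun ω => Nat.find (hcover ω),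
    measurable_find hcover fun k => (hA.1 k).union (MeasurableSet.iUnion hA.1).compl, fun k => ?_⟩
  filter_upwards [hA.ae_eq_of_mem] with ω hω hk
  refine hω _ _ ((Nat.find_spec (hcover ω)).resolve_right ?_) hk
  exact not_not_intro (mem_iUnion.2 ⟨k, hk⟩)

end IsCondPartition

noncomputable def truncDist (k : ℕ) (a b : ℕ → ℝ) : ℝ :=
  √(∑ j ∈ Finset.range k, (a j - b j) ^ 2)

lemma truncDist_eq_dist (k : ℕ) (a b : ℕ → ℝ) :
    truncDist k a b =
      dist (WithLp.toLp 2 fun i : Fin k => a i : EuclideanSpace ℝ (Fin k))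
        (WithLp.toLp 2 fun i : Fin k => b i) := by
  rw [EuclideanSpace.dist_eq, truncDist, ← Fin.sum_univ_eq_sum_range (fun j => (a j - b j) ^ 2)]
  simp only [Real.dist_eq, sq_abs]

lemma truncDist_nonneg (k : ℕ) (a b : ℕ → ℝ) : 0 ≤ truncDist k a b := Real.sqrt_nonneg _

lemma truncDist_comm (k : ℕ) (a b : ℕ → ℝ) : truncDist k a b = truncDist k b a := by
  simp only [truncDist_eq_dist, dist_comm]

lemma truncDist_triangle (k : ℕ) (a b c : ℕ → ℝ) :
    truncDist k a c ≤ truncDist k a b + truncDist k b c := by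
  simp only [truncDist_eq_dist, dist_triangle]

lemma truncDist_eq_zero_iff {k : ℕ} {a b : ℕ → ℝ} :
    truncDist k a b = 0 ↔ ∀ j < k, a j = b j := by
  rw [truncDist, Real.sqrt_eq_zero (Finset.sum_nonneg fun _ _ => sq_nonneg _),
    Finset.sum_eq_zero_iff_of_nonneg fun _ _ => sq_nonneg _]
  simp [sub_eq_zero]

lemma measurable_truncDist {Ω : Type*} {G : MeasurableSpace Ω} {n : Ω → ℕ}
    (hn : Measurable[G] n) {f g : Ω → ℕ → ℝ} (hf : ∀ j, Measurable[G] fun ω => f ω j)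
    (hg : ∀ j, Measurable[G] fun ω => g ω j) :
    Measurable[G] fun ω => truncDist (n ω) (f ω) (g ω) :=
  measurable_apply_index (fun _ => (Finset.measurable_sum _ fun j _ =>
    ((hf j).sub (hg j)).pow_const 2).sqrt) hn

section CondRn

variable {Ω : Type} {m : MeasurableSpace Ω} {μ : Measure Ω} {G : MeasurableSpace Ω}
  {n : Ω → ℕ}

lemma MemCondRn.apply_eq_iff {f g : Ω → ℕ → ℝ} (hf : MemCondRn G n f) (hg : MemCondRn G n g)
    (ω : Ω) : f ω = g ω ↔ ∀ j < n ω, f ω j = g ω j := by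
  refine ⟨fun h j _ => congrFun h j, fun h => funext fun j => ?_⟩
  by_cases hj : j < n ω
  · exact h j hj
  · rw [hf.2 ω j (not_lt.1 hj), hg.2 ω j (not_lt.1 hj)]

lemma exists_memCondRn_glue {A : ℕ → Set Ω} (hA : IsCondPartition μ G A)
    (fk : ℕ → {f : Ω → ℕ → ℝ // MemCondRn G n f}) :
    ∃ f₀ : {f : Ω → ℕ → ℝ // MemCondRn G n f},
      ∀ k, ∀ᵐ ω ∂μ, ω ∈ A k → ∀ j, f₀.1 ω j = (fk k).1 ω j := by
  obtain ⟨ι, hι, hιA⟩ := hA.exists_measurable_index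
  refine ⟨⟨fun ω => (fk (ι ω)).1 ω,
    fun j => measurable_apply_index (fun k => (fk k).2.1 j) hι,
    fun ω => (fk (ι ω)).2.2 ω⟩, fun k => ?_⟩
  filter_upwards [hιA k] with ω hω hk j
  rw [hω hk]

def condRnSetoid (μ : Measure Ω) (G : MeasurableSpace Ω) (n : Ω → ℕ) :
    Setoid {f : Ω → ℕ → ℝ // MemCondRn G n f} where
  r f g := f.1 =ᵐ[μ] g.1
  iseqv := ⟨fun _ => EventuallyEq.rfl, EventuallyEq.symm, EventuallyEq.trans⟩

abbrev CondRn (μ : Measure Ω) (G : MeasurableSpace Ω) (n : Ω → ℕ) : Type :=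
  Quotient (condRnSetoid μ G n)

namespace CondRn

lemma ext_iff {x y : CondRn μ G n} : x = y ↔ x.out.1 =ᵐ[μ] y.out.1 :=
  Quotient.out_equiv_out.symm

lemma out_ae_eq (f : {f : Ω → ℕ → ℝ // MemCondRn G n f}) :
    (Quotient.mk (condRnSetoid μ G n) f).out.1 =ᵐ[μ] f.1 :=
  Quotient.mk_out (s := condRnSetoid μ G n) f

noncomputable def dist (x y : CondRn μ G n) (ω : Ω) : ℝ :=
  truncDist (n ω) (x.out.1 ω) (y.out.1 ω)

lemma dist_eq_zero_iff {x y : CondRn μ G n} {ω : Ω} : dist x y ω = 0 ↔ x.out.1 ω = y.out.1 ω :=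
  truncDist_eq_zero_iff.trans (x.out.2.apply_eq_iff y.out.2 ω).symm

lemma dist_mk_ae_eq (f g : {f : Ω → ℕ → ℝ // MemCondRn G n f}) :
    dist (Quotient.mk (condRnSetoid μ G n) f) (Quotient.mk _ g) =ᵐ[μ]
      fun ω => truncDist (n ω) (f.1 ω) (g.1 ω) := by
  filter_upwards [out_ae_eq (μ := μ) f, out_ae_eq (μ := μ) g] with ω hf hg
  rw [dist, hf, hg]

lemma dist_mk_eq_zero_of_glue {A : ℕ → Set Ω} {fk : ℕ → {f : Ω → ℕ → ℝ // MemCondRn G n f}}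
    {f₀ : {f : Ω → ℕ → ℝ // MemCondRn G n f}}
    (hf₀ : ∀ k, ∀ᵐ ω ∂μ, ω ∈ A k → ∀ j, f₀.1 ω j = (fk k).1 ω j) (k : ℕ) :
    ∀ᵐ ω ∂μ, ω ∈ A k →
      dist (Quotient.mk (condRnSetoid μ G n) f₀) (Quotient.mk _ (fk k)) ω = 0 := by
  filter_upwards [dist_mk_ae_eq f₀ (fk k), hf₀ k] with ω hdist hglue hk
  rw [hdist, funext (hglue hk), truncDist_eq_zero_iff]
  exact fun _ _ => rfl

lemma existsUnique_concat {A : ℕ → Set Ω} (hA : IsCondPartition μ G A) (x : ℕ → CondRn μ G n) :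
    ∃! x₀ : CondRn μ G n, ∀ k, ∀ᵐ ω ∂μ, ω ∈ A k → dist x₀ (x k) ω = 0 := by
  obtain ⟨f₀, hf₀⟩ := exists_memCondRn_glue hA fun k => (x k).out
  have hx₀ := dist_mk_eq_zero_of_glue hf₀
  simp only [Quotient.out_eq] at hx₀
  refine ⟨Quotient.mk _ f₀, hx₀, fun y hy => ext_iff.2 (hA.ae_of_forall_ae_mem fun k => ?_)⟩
  filter_upwards [hy k, hx₀ k] with ω hy hx₀ hk
  exact (dist_eq_zero_iff.1 (hy hk)).trans (dist_eq_zero_iff.1 (hx₀ hk)).symm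

variable (μ) in
noncomputable def condMetric (hn : Measurable[G] n) : CondMetric μ G (CondRn μ G n) where
  d := dist
  measurable_d x y := measurable_truncDist hn x.out.2.1 y.out.2.1
  nonneg x y := .of_forall fun _ => truncDist_nonneg _ _ _
  eq_iff x y := by simp only [EventuallyEq, dist_eq_zero_iff, ext_iff]
  symm x y := .of_forall fun _ => truncDist_comm _ _ _
  triangle x y z := .of_forall fun _ => truncDist_triangle _ _ _ _
  concat_spec A hA := existsUnique_concat hA

end CondRn

end CondRn

theorem condRn_condMetric_general {Ω : Type} {m : MeasurableSpace Ω} {μ : Measure Ω}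
    {G : MeasurableSpace Ω} (n : Ω → ℕ) (hn : Measurable[G] n) :
    ∃ (Xq : Type) (q : {f : Ω → ℕ → ℝ // MemCondRn G n f} → Xq)
      (D : CondMetric μ G Xq),
      Function.Surjective q ∧
      (∀ f g, q f = q g ↔ ∀ᵐ ω ∂μ, ∀ j, f.1 ω j = g.1 ω j) ∧
      -- the conditional metric is the Euclidean distance in ℝ^{n ω}
      (∀ f g, D.d (q f) (q g) =ᵐ[μ] fun ω =>
        Real.sqrt (∑ j ∈ Finset.range (n ω), (f.1 ω j - g.1 ω j) ^ 2)) ∧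
      -- concatenations exist and are computed by a.e. gluing
      ∀ (A : ℕ → Set Ω) (hA : IsCondPartition μ G A)
        (fk : ℕ → {f : Ω → ℕ → ℝ // MemCondRn G n f}),
        (∃ f₀ : {f : Ω → ℕ → ℝ // MemCondRn G n f},
          ∀ k, ∀ᵐ ω ∂μ, ω ∈ A k → ∀ j, f₀.1 ω j = (fk k).1 ω j) ∧
        ∀ f₀ : {f : Ω → ℕ → ℝ // MemCondRn G n f},
          (∀ k, ∀ᵐ ω ∂μ, ω ∈ A k → ∀ j, f₀.1 ω j = (fk k).1 ω j) →
          D.concat A hA (fun k => q (fk k)) = q f₀ := by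
  refine ⟨CondRn μ G n, Quotient.mk _, CondRn.condMetric μ hn, Quotient.mk_surjective,
    fun f g => Quotient.eq.trans (eventually_congr (.of_forall fun _ => funext_iff)),
    CondRn.dist_mk_ae_eq, fun A hA fk => ⟨exists_memCondRn_glue hA fk, fun f₀ hf₀ =>
      (CondRn.condMetric μ hn).concat_eq hA (CondRn.dist_mk_eq_zero_of_glue hf₀)⟩⟩

/-- **Example 2.6.2 (conditional Euclidean space with measurable dimension).** For every
`𝓕ₜ`-measurable dimension `n = Σₖ 1_{Aₖ} nₖ ∈ L⁰ₜ(ℕ)`, the space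
`L⁰ₜ(ℝ)ⁿ = {Σₖ 1_{Aₖ} xₖ : xₖ ∈ L⁰ₜ(ℝ^{nₖ})}` with the blockwise Euclidean metric
`d(x,x̄) = Σₖ 1_{Aₖ} d_{L⁰ₜ(ℝ^{nₖ})}(xₖ,x̄ₖ)` is an `𝓕ₜ`-conditional metric space. -/
theorem condRn_condMetric {Ω : Type} {m : MeasurableSpace Ω} {μ : Measure Ω}
    [IsProbabilityMeasure μ] {G : MeasurableSpace Ω} (hG : G ≤ m)
    (n : Ω → ℕ) (hn : Measurable[G] n) :
    ∃ (Xq : Type) (q : {f : Ω → ℕ → ℝ // MemCondRn G n f} → Xq)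
      (D : CondMetric μ G Xq),
      Function.Surjective q ∧
      (∀ f g, q f = q g ↔ ∀ᵐ ω ∂μ, ∀ j, f.1 ω j = g.1 ω j) ∧
      -- the conditional metric is the Euclidean distance in ℝ^{n ω}
      (∀ f g, D.d (q f) (q g) =ᵐ[μ] fun ω =>
        Real.sqrt (∑ j ∈ Finset.range (n ω), (f.1 ω j - g.1 ω j) ^ 2)) ∧
      -- concatenations exist and are computed by a.e. gluing
      ∀ (A : ℕ → Set Ω) (hA : IsCondPartition μ G A)
        (fk : ℕ → {f : Ω → ℕ → ℝ // MemCondRn G n f}),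
        (∃ f₀ : {f : Ω → ℕ → ℝ // MemCondRn G n f},
          ∀ k, ∀ᵐ ω ∂μ, ω ∈ A k → ∀ j, f₀.1 ω j = (fk k).1 ω j) ∧
        ∀ f₀ : {f : Ω → ℕ → ℝ // MemCondRn G n f},
          (∀ k, ∀ᵐ ω ∂μ, ω ∈ A k → ∀ j, f₀.1 ω j = (fk k).1 ω j) →
          D.concat A hA (fun k => q (fk k)) = q f₀ :=
  condRn_condMetric_general (m := m) n hn

end CondPaper
end

section
/- (Conditional Weierstrass theorem) Let (Z,d) be a 𝓖-conditional metric space, let H ⊆ Z be 𝓖-stable and conditionally sequentially compact, and let f : H → L̲⁰_𝓖 be 𝓖-stable and sequentially upper semi-continuous. Then the essential supremum ess sup_{z∈H} f(z) is attained: there exists z* ∈ H with f(z*) = ess sup_{z∈H} f(z). -/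
open MeasureTheory Filter Topology Set

namespace CondPaper

open scoped ENNReal

/-! The values `{f z : z ∈ H}` form an a.s. upward directed family (concatenate `z` and `w`
along `{f w ≤ f z}`), so their essential supremum is the a.s. supremum of an a.s. increasing
sequence `f (y n)`. A measurable subsequence `y_{n_k}` converges to some `z₀ ∈ H`; by stability
`f (y_{n_k}) = f (y (n_k))` a.s., which still increases to the essential supremum, and upper
semicontinuity bounds that limit by `f z₀`. -/

/-- The logistic function `(1 + e^{-x})⁻¹`: a strictly monotone map into `[0, 1]`, so that
suprema of `EReal`-valued functions can be compared through finite integrals. -/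
noncomputable def erealSigmoid (x : EReal) : ℝ≥0∞ :=
  ENNReal.orderIsoIicOneBirational x.exp

theorem erealSigmoid_strictMono : StrictMono erealSigmoid :=
  (Subtype.strictMono_coe _).comp (ENNReal.orderIsoIicOneBirational.strictMono.comp
    EReal.exp_strictMono)

theorem erealSigmoid_le_one (x : EReal) : erealSigmoid x ≤ 1 :=
  (ENNReal.orderIsoIicOneBirational x.exp).2

theorem measurable_erealSigmoid : Measurable erealSigmoid :=
  ((EReal.measurable_exp.inv.add_const 1).inv : Measurable fun x : EReal => (x.exp⁻¹ + 1)⁻¹)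

section EssentialSupremum

variable {Ω ι α : Type*} {m : MeasurableSpace Ω} {μ : Measure Ω}

theorem lintegral_erealSigmoid_ne_top [IsFiniteMeasure μ] (g : Ω → EReal) :
    ∫⁻ ω, erealSigmoid (g ω) ∂μ ≠ ∞ :=
  ne_top_of_le_ne_top (measure_ne_top μ univ) <|
    (lintegral_mono fun ω => erealSigmoid_le_one (g ω)).trans_eq lintegral_one

theorem exists_seq_ae_le_iSup [IsFiniteMeasure μ] {F : ι → Ω → EReal} {s : Set ι}
    (hs : s.Nonempty) (hF : ∀ i ∈ s, Measurable (F i)) :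
    ∃ y : ℕ → ι, (∀ n, y n ∈ s) ∧ ∀ i ∈ s, ∀ᵐ ω ∂μ, F i ω ≤ ⨆ n, F (y n) ω := by
  let I : (ℕ → ι) → ℝ≥0∞ := fun y => ∫⁻ ω, erealSigmoid (⨆ n, F (y n) ω) ∂μ
  let S := I '' {y | ∀ n, y n ∈ s}
  -- A maximizer `y` of `I` (obtained by interleaving a maximizing sequence of sequences)
  -- dominates each `F i`: appending `i` to `y` cannot raise `I`, hence not the supremum either.
  obtain ⟨i₀, hi₀⟩ := hs
  obtain ⟨u, -, hu, hu_mem⟩ :=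
    exists_seq_tendsto_sSup (S := S) ⟨_, fun _ => i₀, fun _ => hi₀, rfl⟩ (OrderTop.bddAbove S)
  choose Y hY hIY using hu_mem
  let y : ℕ → ι := fun j => Y (Nat.unpair j).1 (Nat.unpair j).2
  have hy : ∀ n, y n ∈ s := fun j => hY _ _
  have hIy : I y = sSup S := by
    refine le_antisymm (le_sSup ⟨y, hy, rfl⟩) (le_of_tendsto' hu fun k => ?_)
    rw [← hIY k]
    refine lintegral_mono fun ω => erealSigmoid_strictMono.monotone (iSup_le fun n => ?_)
    exact le_iSup_of_le (Nat.pair k n) (by simp [y])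
  refine ⟨y, hy, fun i hi => ?_⟩
  let y' : ℕ → ι := fun n => Nat.casesOn n i y
  have hy' : ∀ n, y' n ∈ s := fun n => by cases n <;> simp [y', hi, hy]
  have hle : ∀ ω, ⨆ n, F (y n) ω ≤ ⨆ n, F (y' n) ω :=
    fun ω => iSup_le fun n => le_iSup_of_le (n + 1) le_rfl
  have heq : (fun ω => erealSigmoid (⨆ n, F (y n) ω))
      =ᵐ[μ] fun ω => erealSigmoid (⨆ n, F (y' n) ω) :=
    ae_eq_of_ae_le_of_lintegral_le
      (ae_of_all _ fun ω => erealSigmoid_strictMono.monotone (hle ω))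
      (lintegral_erealSigmoid_ne_top _)
      (measurable_erealSigmoid.comp (Measurable.iSup fun n => hF _ (hy' n))).aemeasurable
      ((le_sSup (s := S) ⟨y', hy', rfl⟩).trans_eq hIy.symm)
  filter_upwards [heq] with ω hω
  rw [← erealSigmoid_strictMono.le_iff_le, hω]
  exact erealSigmoid_strictMono.monotone (le_iSup_of_le 0 le_rfl)

theorem exists_ae_monotone_seq_ae_le [Preorder α] {F : ι → Ω → α} {s : Set ι}
    (hdir : ∀ i ∈ s, ∀ j ∈ s, ∃ k ∈ s, ∀ᵐ ω ∂μ, F i ω ≤ F k ω ∧ F j ω ≤ F k ω)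
    {y : ℕ → ι} (hy : ∀ n, y n ∈ s) :
    ∃ y' : ℕ → ι, (∀ n, y' n ∈ s) ∧
      ∀ᵐ ω ∂μ, Monotone (fun n => F (y' n) ω) ∧ ∀ n, F (y n) ω ≤ F (y' n) ω := by
  have : Nonempty ι := ⟨y 0⟩
  choose! ub hub_mem hub using hdir
  let y' : ℕ → ι := fun n => Nat.rec (y 0) (fun n yn => ub yn (y (n + 1))) n
  have hy' : ∀ n, y' n ∈ s := fun n => by
    induction n with
    | zero => exact hy 0
    | succ n ih => exact hub_mem _ ih _ (hy (n + 1))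
  refine ⟨y', hy', ?_⟩
  filter_upwards [ae_all_iff.2 fun n => hub _ (hy' n) _ (hy (n + 1))] with ω h
  refine ⟨monotone_nat_of_le_succ fun n => (h n).1, fun n => ?_⟩
  cases n with
  | zero => exact le_rfl
  | succ n => exact (h n).2

theorem exists_ae_monotone_seq_ae_le_iSup [IsFiniteMeasure μ] {F : ι → Ω → EReal} {s : Set ι}
    (hs : s.Nonempty) (hF : ∀ i ∈ s, Measurable (F i))
    (hdir : ∀ i ∈ s, ∀ j ∈ s, ∃ k ∈ s, ∀ᵐ ω ∂μ, F i ω ≤ F k ω ∧ F j ω ≤ F k ω) :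
    ∃ y : ℕ → ι, (∀ n, y n ∈ s) ∧ (∀ᵐ ω ∂μ, Monotone fun n => F (y n) ω) ∧
      ∀ i ∈ s, ∀ᵐ ω ∂μ, F i ω ≤ ⨆ n, F (y n) ω := by
  obtain ⟨y, hy, hdom⟩ := exists_seq_ae_le_iSup (μ := μ) hs hF
  obtain ⟨y', hy', hmono⟩ := exists_ae_monotone_seq_ae_le hdir hy
  refine ⟨y', hy', hmono.mono fun ω h => h.1, fun i hi => ?_⟩
  filter_upwards [hdom i hi, hmono] with ω hi' h
  exact hi'.trans (iSup_mono h.2)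

end EssentialSupremum

section Stability

variable {Ω β Z : Type*} {m : MeasurableSpace Ω} {μ : Measure Ω} {G : MeasurableSpace Ω}
  {D : CondMetric μ G Z} {H : Set Z} {f : Z → Ω → β}

def IsStableFun (D : CondMetric μ G Z) (H : Set Z) (f : Z → Ω → β) : Prop :=
  ∀ (A : ℕ → Set Ω) (hA : IsCondPartition μ G A) (z : ℕ → Z),
    (∀ k, z k ∈ H) → ∀ k, ∀ᵐ ω ∂μ, ω ∈ A k → f (D.concat A hA z) ω = f (z k) ω

theorem StableSet.subseq_mem (hH : StableSet D H) {x : ℕ → Z} (hx : ∀ k, x k ∈ H)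
    {n : Ω → ℕ} (hn : Measurable[G] n) : D.subseq x n hn ∈ H :=
  hH.2 _ _ x hx

theorem IsStableFun.ae_subseq_eq (hf : IsStableFun D H f) {x : ℕ → Z} (hx : ∀ k, x k ∈ H)
    {n : Ω → ℕ} (hn : Measurable[G] n) : ∀ᵐ ω ∂μ, f (D.subseq x n hn) ω = f (x (n ω)) ω := by
  filter_upwards [ae_all_iff.2 (hf _ (CondMetric.isCondPartition_level hn μ) x hx)] with ω hω
  exact hω (n ω) rfl

theorem IsStableFun.exists_ae_eq_sup [LinearOrder β] [TopologicalSpace β] [OrderClosedTopology β]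
    [SecondCountableTopology β] [MeasurableSpace β] [OpensMeasurableSpace β]
    (hf : IsStableFun D H f) (hH : StableSet D H) (hfm : ∀ z ∈ H, Measurable[G] (f z))
    {z w : Z} (hz : z ∈ H) (hw : w ∈ H) : ∃ u ∈ H, ∀ᵐ ω ∂μ, f u ω = f z ω ⊔ f w ω := by
  classical
  let n : Ω → ℕ := fun ω => if f w ω ≤ f z ω then 0 else 1
  have hn : Measurable[G] n :=
    Measurable.ite (measurableSet_le (hfm w hw) (hfm z hz)) measurable_const measurable_const
  let x : ℕ → Z := fun k => if k = 0 then z else w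
  have hx : ∀ k, x k ∈ H := fun k => by by_cases hk : k = 0 <;> simp [x, hk, hz, hw]
  refine ⟨D.subseq x n hn, hH.subseq_mem hx hn, ?_⟩
  filter_upwards [hf.ae_subseq_eq hx hn] with ω hω
  by_cases h : f w ω ≤ f z ω
  · simp [hω, n, x, h]
  · simp [hω, n, x, h, (not_le.1 h).le]

theorem MIdx.ae_tendsto_atTop (N : MIdx μ G) :
    ∀ᵐ ω ∂μ, Tendsto (fun k => N.n k ω) atTop atTop := by
  filter_upwards [ae_all_iff.2 N.lt] with ω h
  exact (strictMono_nat_of_lt_succ h).tendsto_atTop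

end Stability

/-- **Conditional Weierstrass theorem.** A `𝓖`-stable, sequentially upper semi-continuous
function `f : H → L̲⁰_𝓖` on a `𝓖`-stable, conditionally sequentially compact subset `H` of a
`𝓖`-conditional metric space attains its essential supremum: there is `z₀ ∈ H` with
`f z ≤ f z₀` a.s. for all `z ∈ H` (so that `f z₀ = ess sup_{z ∈ H} f z`). -/
theorem conditional_weierstrass {Ω : Type*} {m : MeasurableSpace Ω} {μ : Measure Ω}
    [IsProbabilityMeasure μ] {G : MeasurableSpace Ω} (hG : G ≤ m) {Z : Type*}
    (D : CondMetric μ G Z) (H : Set Z)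
    (hHstable : StableSet D H) (hHcomp : CondSeqCompact D H)
    (f : Z → Ω → EReal)
    -- f maps H into L̲⁰_𝓖
    (hfL : ∀ z ∈ H, InLbar μ G (f z))
    -- f is 𝓖-stable on H
    (hfstable : ∀ (A : ℕ → Set Ω) (hA : IsCondPartition μ G A) (z : ℕ → Z),
      (∀ k, z k ∈ H) → ∀ k, ∀ᵐ ω ∂μ, ω ∈ A k → f (D.concat A hA z) ω = f (z k) ω)
    -- f is sequentially upper semi-continuous on H
    (hfusc : ∀ (z : ℕ → Z) (z₀ : Z), (∀ k, z k ∈ H) → z₀ ∈ H → D.TendstoAE z z₀ →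
      ∀ᵐ ω ∂μ, limsup (fun k => f (z k) ω) atTop ≤ f z₀ ω) :
    ∃ z₀ ∈ H, ∀ z ∈ H, ∀ᵐ ω ∂μ, f z ω ≤ f z₀ ω := by
  have hdir : ∀ z ∈ H, ∀ w ∈ H, ∃ u ∈ H, ∀ᵐ ω ∂μ, f z ω ≤ f u ω ∧ f w ω ≤ f u ω := by
    intro z hz w hw
    obtain ⟨u, hu, hfu⟩ :=
      IsStableFun.exists_ae_eq_sup hfstable hHstable (fun z hz => (hfL z hz).1) hz hw
    exact ⟨u, hu, hfu.mono fun ω h => h ▸ ⟨le_sup_left, le_sup_right⟩⟩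
  obtain ⟨y, hyH, hy_mono, hy_dom⟩ := exists_ae_monotone_seq_ae_le_iSup hHstable.1
    (fun z hz => (hfL z hz).1.mono hG le_rfl) hdir
  obtain ⟨N, z₀, hz₀H, hconv⟩ := hHcomp y hyH
  have hlimsup := hfusc _ z₀ (fun k => hHstable.subseq_mem hyH (N.meas k)) hz₀H hconv
  have hf_subseq := ae_all_iff.2 fun k => IsStableFun.ae_subseq_eq hfstable hyH (N.meas k)
  refine ⟨z₀, hz₀H, fun z hz => ?_⟩
  filter_upwards [hy_dom z hz, hy_mono, N.ae_tendsto_atTop, hf_subseq, hlimsup]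
    with ω hdom hmono hN hsub husc
  calc f z ω ≤ ⨆ n, f (y n) ω := hdom
    _ = limsup (fun k => f (y (N.n k ω)) ω) atTop :=
      (((tendsto_atTop_iSup hmono).comp hN).limsup_eq).symm
    _ = limsup (fun k => f (D.subseq y (N.n k) (N.meas k)) ω) atTop := by simp only [hsub]
    _ ≤ f z₀ ω := husc

end CondPaper
end

section
/- (Conditional maximum theorem) Let X and Z be 𝓖-conditional metric spaces, let Θ : X → subsets of Z satisfy conditions (c1)–(c4), and let f : X × Z → L̲⁰_𝓖 be 𝓖-stable and sequentially upper semi-continuous. Then for every x ∈ X the essential supremum g(x) := ess sup_{z∈Θ(x)} f(x,z) is attained by some z* ∈ Θ(x), and the function g : X → L̲⁰_𝓖 is 𝓖-stable and sequentially upper semi-continuous. -/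
open MeasureTheory Filter Topology Set

namespace CondPaper

section Aux

variable {Ω : Type*} {m : MeasurableSpace Ω} {μ : Measure Ω} {G : MeasurableSpace Ω}
  {X Z : Type*}

lemma IsCondPartition.ae_exists {A : ℕ → Set Ω} (hA : IsCondPartition μ G A) :
    ∀ᵐ ω ∂μ, ∃ k, ω ∈ A k := by
  have h : ∀ᵐ ω ∂μ, ω ∈ ⋃ k, A k := by
    rw [ae_iff]
    have he : {a | a ∉ ⋃ k, A k} = (⋃ k, A k)ᶜ := rfl
    rw [he, hA.2.2]
  filter_upwards [h] with ω hω
  exact Set.mem_iUnion.1 hω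

namespace CondMetric

lemma concat_prop (D : CondMetric μ G X) (A : ℕ → Set Ω) (hA : IsCondPartition μ G A)
    (x : ℕ → X) (k : ℕ) :
    ∀ᵐ ω ∂μ, ω ∈ A k → D.d (D.concat A hA x) (x k) ω = 0 :=
  (D.concat_spec A hA x).choose_spec.1 k

lemma concat_eq_s15 (D : CondMetric μ G X) (A : ℕ → Set Ω) (hA : IsCondPartition μ G A)
    (x : ℕ → X) (y : X) (h : ∀ k, ∀ᵐ ω ∂μ, ω ∈ A k → D.d y (x k) ω = 0) :
    D.concat A hA x = y :=
  ((D.concat_spec A hA x).choose_spec.2 y h).symm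

lemma concat_const (D : CondMetric μ G X) (A : ℕ → Set Ω) (hA : IsCondPartition μ G A)
    (x : X) : D.concat A hA (fun _ => x) = x := by
  refine D.concat_eq_s15 A hA _ x fun k => ?_
  filter_upwards [(D.eq_iff x x).2 rfl] with ω hω _
  exact hω

lemma d_self (D : CondMetric μ G X) (x : X) : ∀ᵐ ω ∂μ, D.d x x ω = 0 :=
  (D.eq_iff x x).2 rfl

/-- two-sided evaluation of the distance of two concatenations along the same partition -/
lemma d_concat_concat (D : CondMetric μ G X) (A : ℕ → Set Ω) (hA : IsCondPartition μ G A)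
    (u v : ℕ → X) (k : ℕ) :
    ∀ᵐ ω ∂μ, ω ∈ A k → D.d (D.concat A hA u) (D.concat A hA v) ω = D.d (u k) (v k) ω := by
  set cu := D.concat A hA u
  set cv := D.concat A hA v
  filter_upwards [D.concat_prop A hA u k, D.concat_prop A hA v k,
    D.triangle cu (u k) cv, D.triangle (u k) (v k) cv,
    D.triangle (u k) cu cv, D.triangle (u k) cv (v k),
    D.symm cu (u k), D.symm cv (v k)]
    with ω h1 h2 t1 t2 t3 t4 s1 s2 hk
  have h1' := h1 hk
  have h2' := h2 hk
  apply le_antisymm <;> linarith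

lemma d_concat_left (D : CondMetric μ G X) (A : ℕ → Set Ω) (hA : IsCondPartition μ G A)
    (y : X) (v : ℕ → X) (k : ℕ) :
    ∀ᵐ ω ∂μ, ω ∈ A k → D.d y (D.concat A hA v) ω = D.d y (v k) ω := by
  have h := D.d_concat_concat A hA (fun _ => y) v k
  rwa [D.concat_const A hA y] at h

lemma d_subseq_subseq (D : CondMetric μ G X) (u v : ℕ → X) (n : Ω → ℕ)
    (hn : Measurable[G] n) :
    ∀ᵐ ω ∂μ, D.d (D.subseq u n hn) (D.subseq v n hn) ω = D.d (u (n ω)) (v (n ω)) ω := by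
  have h := ae_all_iff.2 (D.d_concat_concat (fun j => {ω | n ω = j})
    (isCondPartition_level hn μ) u v)
  filter_upwards [h] with ω hω
  exact hω (n ω) rfl

lemma d_subseq_left (D : CondMetric μ G X) (y : X) (v : ℕ → X) (n : Ω → ℕ)
    (hn : Measurable[G] n) :
    ∀ᵐ ω ∂μ, D.d y (D.subseq v n hn) ω = D.d y (v (n ω)) ω := by
  have h := ae_all_iff.2 (D.d_concat_left (fun j => {ω | n ω = j})
    (isCondPartition_level hn μ) y v)
  filter_upwards [h] with ω hω
  exact hω (n ω) rfl

lemma tendstoAE_const (D : CondMetric μ G X) (x : X) : D.TendstoAE (fun _ => x) x := by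
  filter_upwards [D.d_self x] with ω hω
  simp only [hω]
  exact tendsto_const_nhds

end CondMetric

lemma MIdx.le_apply (N : MIdx μ G) : ∀ᵐ ω ∂μ, ∀ k, k ≤ N.n k ω := by
  have h := ae_all_iff.2 N.lt
  filter_upwards [h] with ω hω
  intro k
  induction k with
  | zero => exact Nat.zero_le _
  | succ k ih => exact Nat.lt_of_le_of_lt ih (hω k)

/-- a measurable subsequence of an a.s. convergent sequence converges a.s. -/
lemma CondMetric.tendstoAE_subseq (D : CondMetric μ G X) {x : ℕ → X} {x₀ : X}
    (hx : D.TendstoAE x x₀) (N : MIdx μ G) :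
    D.TendstoAE (fun k => D.subseq x (N.n k) (N.meas k)) x₀ := by
  have h := ae_all_iff.2 fun k => D.d_subseq_left x₀ x (N.n k) (N.meas k)
  filter_upwards [hx, h, N.le_apply] with ω hω heq hle
  have hcomp : Tendsto (fun k => N.n k ω) atTop atTop :=
    tendsto_atTop_mono hle tendsto_id
  have : Tendsto (fun k => D.d x₀ (x (N.n k ω)) ω) atTop (𝓝 0) := hω.comp hcomp
  exact this.congr fun k => (heq k).symm

end Aux
section Phi

/-- a bounded strictly monotone measurable scalarization of `EReal`. -/
noncomputable def phi : EReal → ℝ := fun e =>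
  if e = ⊤ then 2 else if e = ⊥ then -2 else Real.arctan e.toReal

lemma phi_top : phi ⊤ = 2 := rfl

lemma pi_div_two_lt_two : Real.pi / 2 < 2 := by
  have := Real.pi_lt_d2
  linarith

lemma phi_abs_le (e : EReal) : |phi e| ≤ 2 := by
  unfold phi
  split_ifs with h1 h2
  · simp
  · simp
  · rw [abs_le]
    constructor
    · have := Real.neg_pi_div_two_lt_arctan e.toReal
      linarith [pi_div_two_lt_two]
    · have := Real.arctan_lt_pi_div_two e.toReal
      linarith [pi_div_two_lt_two]

lemma phi_arctan_lt (r : ℝ) : Real.arctan r < 2 :=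
  lt_trans (Real.arctan_lt_pi_div_two r) pi_div_two_lt_two

lemma phi_lt_arctan (r : ℝ) : -2 < Real.arctan r := by
  have := Real.neg_pi_div_two_lt_arctan r
  linarith [pi_div_two_lt_two]

lemma phi_strictMono : StrictMono phi := by
  intro a b hab
  unfold phi
  rcases eq_or_ne b ⊤ with hb | hb
  · subst hb
    rw [if_pos rfl]
    have ha : a ≠ ⊤ := hab.ne
    rw [if_neg ha]
    rcases eq_or_ne a ⊥ with ha2 | ha2
    · rw [if_pos ha2]; norm_num
    · rw [if_neg ha2]; exact phi_arctan_lt _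
  · have hb2 : b ≠ ⊥ := fun h => absurd (h ▸ hab) (not_lt_bot)
    rw [if_neg hb, if_neg hb2]
    have ha : a ≠ ⊤ := fun h => absurd hab (by simp [h])
    rw [if_neg ha]
    rcases eq_or_ne a ⊥ with ha2 | ha2
    · rw [if_pos ha2]; exact phi_lt_arctan _
    · rw [if_neg ha2]
      apply Real.arctan_strictMono
      have h1 := EReal.coe_toReal ha ha2
      have h2 := EReal.coe_toReal hb hb2
      rw [← EReal.coe_lt_coe_iff, h1, h2]
      exact hab

lemma phi_injective : Function.Injective phi := phi_strictMono.injective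

lemma phi_mono : Monotone phi := phi_strictMono.monotone

lemma phi_measurable : Measurable phi := by
  unfold phi
  refine Measurable.ite (MeasurableSet.singleton ⊤) measurable_const ?_
  exact Measurable.ite (MeasurableSet.singleton ⊥) measurable_const
    (Real.measurable_arctan.comp measurable_ereal_toReal)

variable {Ω : Type*} {m : MeasurableSpace Ω} {μ : Measure Ω} [IsProbabilityMeasure μ]

lemma integrable_phi_comp {u : Ω → EReal} (hu : Measurable u) :
    Integrable (fun ω => phi (u ω)) μ := by
  refine (integrable_const (2:ℝ)).mono' ((phi_measurable.comp hu).aestronglyMeasurable) ?_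
  filter_upwards with ω
  simpa using phi_abs_le (u ω)

lemma integral_phi_le_two {u : Ω → EReal} (hu : Measurable u) :
    ∫ ω, phi (u ω) ∂μ ≤ 2 := by
  calc ∫ ω, phi (u ω) ∂μ ≤ ∫ _, (2:ℝ) ∂μ := by
        refine integral_mono (integrable_phi_comp hu) (integrable_const _) fun ω => ?_
        have := phi_abs_le (u ω); rw [abs_le] at this; exact this.2
    _ = 2 := by simp

/-- if `u ≤ v` pointwise a.e. and the `phi`-integrals compare the other way, then `u = v` a.e. -/
lemma ae_eq_of_phi_integral_le {u v : Ω → EReal} (hu : Measurable u) (hv : Measurable v)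
    (hle : ∀ᵐ ω ∂μ, u ω ≤ v ω) (hint : ∫ ω, phi (v ω) ∂μ ≤ ∫ ω, phi (u ω) ∂μ) :
    u =ᵐ[μ] v := by
  have h1 : (fun ω => phi (u ω)) ≤ᵐ[μ] fun ω => phi (v ω) := by
    filter_upwards [hle] with ω h; exact phi_mono h
  have h2 : ∫ ω, phi (u ω) ∂μ ≤ ∫ ω, phi (v ω) ∂μ :=
    integral_mono_ae (integrable_phi_comp hu) (integrable_phi_comp hv) h1
  have heq := (integral_eq_iff_of_ae_le (integrable_phi_comp hu)
    (integrable_phi_comp hv) h1).1 (le_antisymm h2 hint)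
  filter_upwards [heq] with ω h
  exact phi_injective h

end Phi
section FAux

variable {Ω : Type*} {m : MeasurableSpace Ω} {μ : Measure Ω} {G : MeasurableSpace Ω}
  {X Z : Type*}

lemma isCondPartition_pair {S : Set Ω} (hS : MeasurableSet[G] S) :
    IsCondPartition μ G (fun k => if k = 0 then S else if k = 1 then Sᶜ else ∅) := by
  refine ⟨?_, ?_, ?_⟩
  · intro k
    dsimp only
    split_ifs
    exacts [hS, hS.compl, @MeasurableSet.empty _ G]
  · intro i j hij
    rcases i with _ | _ | i <;> rcases j with _ | _ | j <;>
      simp_all [Set.inter_compl_self, Set.compl_inter_self]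
  · have h : (⋃ k, if k = 0 then S else if k = 1 then Sᶜ else (∅ : Set Ω)) = Set.univ := by
      apply Set.eq_univ_of_forall
      intro ω
      by_cases hω : ω ∈ S
      · exact Set.mem_iUnion.2 ⟨0, by simpa using hω⟩
      · exact Set.mem_iUnion.2 ⟨1, by simpa using hω⟩
    simp [h]

lemma exists_max (DX : CondMetric μ G X) (DZ : CondMetric μ G Z) {Θ : X → Set Z}
    (hc2 : ControlC2 DX DZ Θ) {f : X → Z → Ω → EReal}
    (hfstable : ∀ (A : ℕ → Set Ω) (hA : IsCondPartition μ G A) (x : ℕ → X) (z : ℕ → Z),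
      ∀ k, ∀ᵐ ω ∂μ, ω ∈ A k →
        f (DX.concat A hA x) (DZ.concat A hA z) ω = f (x k) (z k) ω)
    {x : X} {z1 z2 : Z} (hfmeas1 : Measurable[G] (f x z1)) (hfmeas2 : Measurable[G] (f x z2))
    (hz1 : z1 ∈ Θ x) (hz2 : z2 ∈ Θ x) :
    ∃ z3 ∈ Θ x, ∀ᵐ ω ∂μ, f x z3 ω = max (f x z1 ω) (f x z2 ω) := by
  classical
  set S : Set Ω := {ω | f x z2 ω ≤ f x z1 ω} with hSdef
  have hSmeas : MeasurableSet[G] S := measurableSet_le hfmeas2 hfmeas1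
  set A : ℕ → Set Ω := fun k => if k = 0 then S else if k = 1 then Sᶜ else ∅ with hAdef
  have hA : IsCondPartition μ G A := isCondPartition_pair (μ := μ) hSmeas
  set zs : ℕ → Z := fun k => if k = 0 then z1 else z2 with hzsdef
  have hzs : ∀ k, zs k ∈ Θ x := by
    intro k; simp only [hzsdef]; split_ifs; exacts [hz1, hz2]
  have hxconst : DX.concat A hA (fun _ => x) = x := DX.concat_const A hA x
  have hmem : DZ.concat A hA zs ∈ Θ x := by
    have h := hc2 A hA fun _ => x
    rw [hxconst] at h
    rw [h]
    exact ⟨zs, hzs, rfl⟩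
  refine ⟨DZ.concat A hA zs, hmem, ?_⟩
  have h0 := hfstable A hA (fun _ => x) zs 0
  have h1 := hfstable A hA (fun _ => x) zs 1
  rw [hxconst] at h0 h1
  have hA0 : A 0 = S := by simp [hAdef]
  have hA1 : A 1 = Sᶜ := by simp [hAdef]
  have hzs0 : zs 0 = z1 := by simp [hzsdef]
  have hzs1 : zs 1 = z2 := by simp [hzsdef]
  filter_upwards [h0, h1] with ω e0 e1
  by_cases hω : ω ∈ S
  · rw [e0 (hA0 ▸ hω), hzs0, max_eq_left (by exact hω)]
  · rw [e1 (hA1 ▸ hω), hzs1, max_eq_right (le_of_not_ge hω)]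

lemma exists_maximizing_seq [IsProbabilityMeasure μ] (hG : G ≤ m)
    {Θ : X → Set Z} {f : X → Z → Ω → EReal} {g : X → Ω → EReal} (x : X)
    (hne : (Θ x).Nonempty)
    (hfmeas : ∀ z, Measurable[G] (f x z))
    (hg2 : ∀ z ∈ Θ x, ∀ᵐ ω ∂μ, f x z ω ≤ g x ω)
    (hg3 : ∀ b : Ω → EReal, Measurable[G] b → (∀ z ∈ Θ x, ∀ᵐ ω ∂μ, f x z ω ≤ b ω) →
        ∀ᵐ ω ∂μ, g x ω ≤ b ω) :
    ∃ w : ℕ → Z, (∀ n, w n ∈ Θ x) ∧ ∀ᵐ ω ∂μ, g x ω = ⨆ n, f x (w n) ω := by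
  classical
  obtain ⟨zbar, hzbar⟩ := hne
  set I : (ℕ → Z) → ℝ := fun w => ∫ ω, phi (⨆ n, f x (w n) ω) ∂μ with hIdef
  set S : Set ℝ := {r | ∃ w : ℕ → Z, (∀ n, w n ∈ Θ x) ∧ r = I w} with hSdef
  have hsupmeas : ∀ w : ℕ → Z, Measurable[m] fun ω => ⨆ n, f x (w n) ω := fun w =>
    Measurable.iSup fun n => ((hfmeas (w n)).mono hG le_rfl)
  have hsupmeasG : ∀ w : ℕ → Z, Measurable[G] fun ω => ⨆ n, f x (w n) ω := fun w =>
    Measurable.iSup fun n => hfmeas (w n)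
  have hSne : S.Nonempty := ⟨I fun _ => zbar, fun _ => zbar, fun _ => hzbar, rfl⟩
  have hSbdd : BddAbove S := by
    refine ⟨2, ?_⟩
    rintro r ⟨w, hw, rfl⟩
    exact integral_phi_le_two (hsupmeas w)
  set M : ℝ := sSup S with hMdef
  have hsel : ∀ j : ℕ, ∃ w : ℕ → Z, (∀ n, w n ∈ Θ x) ∧ M - 1 / (j + 1) < I w := by
    intro j
    have hlt : M - 1 / (j + 1) < M := sub_lt_self M (by positivity)
    obtain ⟨r, ⟨w, hw, rfl⟩, hr⟩ := exists_lt_of_lt_csSup hSne hlt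
    exact ⟨w, hw, hr⟩
  choose W hW1 hW2 using hsel
  set w : ℕ → Z := fun n => W n.unpair.1 n.unpair.2 with hwdef
  have hwmem : ∀ n, w n ∈ Θ x := fun n => hW1 _ _
  set h : Ω → EReal := fun ω => ⨆ n, f x (w n) ω with hhdef
  have hIw_le : I w ≤ M := le_csSup hSbdd ⟨w, hwmem, rfl⟩
  have hWle : ∀ j, I (W j) ≤ I w := by
    intro j
    refine integral_mono (integrable_phi_comp (hsupmeas (W j)))
      (integrable_phi_comp (hsupmeas w)) fun ω => ?_
    refine phi_mono (iSup_le fun i => le_iSup_of_le (Nat.pair j i) (le_of_eq ?_))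
    simp [hwdef, Nat.unpair_pair]
  have hIw_ge : M ≤ I w := by
    have htend : Tendsto (fun j : ℕ => M - 1 / (j + 1)) atTop (𝓝 M) := by
      have h2 : Tendsto (fun j : ℕ => M - 1 / (j + 1)) atTop (𝓝 (M - 0)) :=
        (tendsto_const_nhds (x := M)).sub tendsto_one_div_add_atTop_nhds_zero_nat
      simpa using h2
    exact le_of_tendsto htend (Filter.Eventually.of_forall fun j =>
      ((hW2 j).trans_le (hWle j)).le)
  have hub : ∀ z ∈ Θ x, ∀ᵐ ω ∂μ, f x z ω ≤ h ω := by
    intro z hz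
    set w' : ℕ → Z := fun n => if n = 0 then z else w (n - 1) with hw'def
    have hw'mem : ∀ n, w' n ∈ Θ x := by
      intro n; simp only [hw'def]; split_ifs; exacts [hz, hwmem _]
    have hmono : ∀ ω, h ω ≤ ⨆ n, f x (w' n) ω := fun ω =>
      iSup_le fun n => le_iSup_of_le (n + 1) (le_of_eq (by simp [hw'def]))
    have hI' : I w' ≤ I w := by
      calc I w' ≤ M := le_csSup hSbdd ⟨w', hw'mem, rfl⟩
        _ ≤ I w := hIw_ge
    have heq : h =ᵐ[μ] fun ω => ⨆ n, f x (w' n) ω :=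
      ae_eq_of_phi_integral_le (hsupmeas w) (hsupmeas w')
        (Filter.Eventually.of_forall hmono) hI'
    filter_upwards [heq] with ω hω
    calc f x z ω = f x (w' 0) ω := by simp [hw'def]
      _ ≤ ⨆ n, f x (w' n) ω := le_iSup (fun n => f x (w' n) ω) 0
      _ = h ω := hω.symm
  have hgle : ∀ᵐ ω ∂μ, g x ω ≤ h ω := hg3 h (hsupmeasG w) hub
  have hhle : ∀ᵐ ω ∂μ, h ω ≤ g x ω := by
    filter_upwards [ae_all_iff.2 fun n => hg2 (w n) (hwmem n)] with ω hω
    exact iSup_le hω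
  refine ⟨w, hwmem, ?_⟩
  filter_upwards [hgle, hhle] with ω h1 h2
  exact le_antisymm h1 h2

end FAux
section LimsupAux

variable {Ω : Type*} {m : MeasurableSpace Ω} {μ : Measure Ω} {G : MeasurableSpace Ω}

lemma liminf_comp_ge {b : ℕ → EReal} {k : ℕ → ℕ} (hk : ∀ i, i ≤ k i) :
    liminf b atTop ≤ liminf (fun i => b (k i)) atTop := by
  rw [le_liminf_iff]
  intro c hc
  have h := Filter.eventually_lt_of_lt_liminf hc
  rw [eventually_atTop] at h ⊢
  obtain ⟨K, hK⟩ := h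
  exact ⟨K, fun i hi => hK (k i) (le_trans hi (hk i))⟩

/-- a measurable subsequence along which the values dominate the pointwise `limsup`. -/
lemma exists_midx_liminf (μ : @Measure Ω m) (a : ℕ → Ω → EReal)
    (ha : ∀ n, Measurable[G] (a n)) :
    ∃ N : MIdx μ G, ∀ ω,
      limsup (fun n => a n ω) atTop ≤ liminf (fun k => a (N.n k ω) ω) atTop := by
  classical
  set L : Ω → EReal := fun ω => limsup (fun n => a n ω) atTop with hLdef
  have hLmeas : Measurable[G] L := Measurable.limsup ha
  set t : ℕ → Ω → EReal := fun k ω =>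
    if L ω = ⊤ then ((k : ℝ) : EReal) else (((L ω).toReal - 1 / (k + 1) : ℝ) : EReal)
    with htdef
  have htmeas : ∀ k, Measurable[G] (t k) := by
    intro k
    refine Measurable.ite (hLmeas (MeasurableSet.singleton ⊤)) measurable_const ?_
    exact measurable_coe_real_ereal.comp (hLmeas.ereal_toReal.sub measurable_const)
  have htlt : ∀ k ω, L ω ≠ ⊥ → t k ω < L ω := by
    intro k ω hbot
    by_cases htop : L ω = ⊤
    · simp only [htdef, if_pos htop, htop]
      exact EReal.coe_lt_top _
    · simp only [htdef, if_neg htop]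
      conv_rhs => rw [← EReal.coe_toReal htop hbot]
      rw [EReal.coe_lt_coe_iff]
      have h1 : (0:ℝ) < 1 / (k + 1) := by positivity
      linarith
  have hex : ∀ k M ω, ∃ mn, M < mn ∧ (L ω = ⊥ ∨ t k ω < a mn ω) := by
    intro k M ω
    by_cases hbot : L ω = ⊥
    · exact ⟨M + 1, Nat.lt_succ_self M, Or.inl hbot⟩
    · have hfreq : ∃ᶠ mn in atTop, t k ω < a mn ω :=
        Filter.frequently_lt_of_lt_limsup (by isBoundedDefault) (htlt k ω hbot)
      obtain ⟨mn, hmn1, hmn2⟩ := Filter.frequently_atTop.1 hfreq (M + 1)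
      exact ⟨mn, lt_of_lt_of_le (Nat.lt_succ_self M) hmn1, Or.inr hmn2⟩
  let n : ℕ → Ω → ℕ := fun k => Nat.rec (motive := fun _ => Ω → ℕ) (fun _ => 0)
    (fun k' nk ω => Nat.find (hex k' (nk ω) ω)) k
  have hnsucc : ∀ k ω, n (k + 1) ω = Nat.find (hex k (n k ω) ω) := fun k ω => rfl
  have hlt : ∀ k ω, n k ω < n (k + 1) ω := fun k ω => (Nat.find_spec (hex k (n k ω) ω)).1
  have hprop : ∀ k ω, L ω = ⊥ ∨ t k ω < a (n (k + 1) ω) ω := fun k ω =>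
    (Nat.find_spec (hex k (n k ω) ω)).2
  have hnmeas : ∀ k, Measurable[G] (n k) := by
    intro k
    induction k with
    | zero => exact measurable_const
    | succ k ih =>
      have hQ : ∀ mn : ℕ, MeasurableSet[G] {ω | n k ω < mn ∧ (L ω = ⊥ ∨ t k ω < a mn ω)} := by
        intro mn
        have e : {ω | n k ω < mn ∧ (L ω = ⊥ ∨ t k ω < a mn ω)} =
            (n k ⁻¹' Set.Iio mn) ∩ (L ⁻¹' {⊥} ∪ {ω | t k ω < a mn ω}) := by
          ext ω
          simp [Set.mem_Iio, Set.mem_setOf_eq, Set.mem_inter_iff, Set.mem_union,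
            Set.mem_preimage, Set.mem_singleton_iff]
        rw [e]
        exact (ih MeasurableSet.of_discrete).inter
          ((hLmeas (MeasurableSet.singleton ⊥)).union (measurableSet_lt (htmeas k) (ha mn)))
      refine measurable_to_countable' fun j => ?_
      have hset : n (k + 1) ⁻¹' {j} =
          {ω | n k ω < j ∧ (L ω = ⊥ ∨ t k ω < a j ω)} ∩
            ⋂ i ∈ Set.Iio j, {ω | n k ω < i ∧ (L ω = ⊥ ∨ t k ω < a i ω)}ᶜ := by
        ext ω
        simp only [Set.mem_preimage, Set.mem_singleton_iff, hnsucc, Nat.find_eq_iff,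
          Set.mem_inter_iff, Set.mem_iInter, Set.mem_compl_iff, Set.mem_setOf_eq,
          Set.mem_Iio]
      rw [hset]
      exact (hQ j).inter (MeasurableSet.biInter (Set.to_countable _) fun i _ => (hQ i).compl)
  refine ⟨⟨n, hnmeas, fun k => ae_of_all μ fun ω => hlt k ω⟩, ?_⟩
  intro ω
  by_cases hbot : L ω = ⊥
  · rw [show limsup (fun n => a n ω) atTop = L ω from rfl, hbot]
    exact bot_le
  · have hstep : ∀ k, t k ω < a (n (k + 1) ω) ω := fun k => (hprop k ω).resolve_left hbot
    rw [show limsup (fun n => a n ω) atTop = L ω from rfl, le_liminf_iff]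
    intro b hb
    rw [eventually_atTop]
    have hclaim : ∃ K, ∀ k ≥ K, b ≤ t k ω := by
      by_cases htop : L ω = ⊤
      · induction b using EReal.rec with
        | bot => exact ⟨0, fun k _ => bot_le⟩
        | coe r =>
          obtain ⟨K, hK⟩ := exists_nat_gt r
          refine ⟨K, fun k hk => ?_⟩
          simp only [htdef, if_pos htop]
          rw [EReal.coe_le_coe_iff]
          calc r ≤ K := hK.le
            _ ≤ k := by exact_mod_cast hk
        | top => exact absurd hb not_top_lt
      · set r := (L ω).toReal with hrdef
        have hLr : L ω = (r : EReal) := (EReal.coe_toReal htop hbot).symm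
        induction b using EReal.rec with
        | bot => exact ⟨0, fun k _ => bot_le⟩
        | coe s =>
          have hsr : s < r := by
            rw [hLr, EReal.coe_lt_coe_iff] at hb
            exact hb
          obtain ⟨K, hK⟩ := exists_nat_one_div_lt (show (0:ℝ) < r - s by linarith)
          refine ⟨K, fun k hk => ?_⟩
          simp only [htdef, if_neg htop]
          rw [EReal.coe_le_coe_iff, ← hrdef]
          have hmono : 1 / ((k:ℝ) + 1) ≤ 1 / ((K:ℝ) + 1) := by
            apply one_div_le_one_div_of_le (by positivity)
            have : (K:ℝ) ≤ k := by exact_mod_cast hk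
            linarith
          linarith
        | top => exact absurd hb not_top_lt
    obtain ⟨K, hK⟩ := hclaim
    refine ⟨K + 1, fun k' hk' => ?_⟩
    obtain ⟨k, rfl⟩ : ∃ k, k' = k + 1 :=
      ⟨k' - 1, (Nat.succ_pred_eq_of_pos (lt_of_lt_of_le (Nat.succ_pos K) hk')).symm⟩
    exact lt_of_le_of_lt (hK k (Nat.le_of_succ_le_succ hk')) (hstep k)

end LimsupAux
/-- **Conditional maximum theorem.** If `Θ : X → Set Z` satisfies (c1)–(c4) and
`f : X × Z → L̲⁰_𝓖` is `𝓖`-stable and sequentially upper semi-continuous, then for every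
`x` the essential supremum `g x = ess sup_{z ∈ Θ x} f x z` is attained by some `z* ∈ Θ x`,
and `g` is `𝓖`-stable and sequentially upper semi-continuous. Here `g : X → L̲⁰_𝓖` is any
function satisfying the essential-supremum characterization. -/
theorem conditional_maximum_theorem {Ω : Type*} {m : MeasurableSpace Ω} {μ : Measure Ω}
    [IsProbabilityMeasure μ] {G : MeasurableSpace Ω} (hG : G ≤ m) {X Z : Type*}
    (DX : CondMetric μ G X) (DZ : CondMetric μ G Z) (Θ : X → Set Z)
    (hc1 : ControlC1 Θ) (hc2 : ControlC2 DX DZ Θ) (hc3 : ControlC3 DZ Θ)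
    (hc4 : ControlC4 DX DZ Θ)
    (f : X → Z → Ω → EReal)
    -- f maps into L̲⁰_𝓖
    (hfL : ∀ x z, InLbar μ G (f x z))
    -- f is 𝓖-stable (as a function on the product X × Z)
    (hfstable : ∀ (A : ℕ → Set Ω) (hA : IsCondPartition μ G A) (x : ℕ → X) (z : ℕ → Z),
      ∀ k, ∀ᵐ ω ∂μ, ω ∈ A k →
        f (DX.concat A hA x) (DZ.concat A hA z) ω = f (x k) (z k) ω)
    -- f is sequentially upper semi-continuous (jointly)
    (hfusc : ∀ (x : ℕ → X) (x₀ : X) (z : ℕ → Z) (z₀ : Z),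
      DX.TendstoAE x x₀ → DZ.TendstoAE z z₀ →
      ∀ᵐ ω ∂μ, limsup (fun k => f (x k) (z k) ω) atTop ≤ f x₀ z₀ ω)
    -- g x is the essential supremum of z ↦ f x z over Θ x : it is a 𝓖-measurable
    -- a.e. upper bound which is below every 𝓖-measurable a.e. upper bound
    (g : X → Ω → EReal)
    (hg : ∀ x, Measurable[G] (g x) ∧ (∀ z ∈ Θ x, ∀ᵐ ω ∂μ, f x z ω ≤ g x ω) ∧
      ∀ b : Ω → EReal, Measurable[G] b → (∀ z ∈ Θ x, ∀ᵐ ω ∂μ, f x z ω ≤ b ω) →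
        ∀ᵐ ω ∂μ, g x ω ≤ b ω) :
    -- (1) the essential supremum is attained
    (∀ x, ∃ z₀ ∈ Θ x, g x =ᵐ[μ] f x z₀) ∧
    -- (2) g is 𝓖-stable
    (∀ (A : ℕ → Set Ω) (hA : IsCondPartition μ G A) (x : ℕ → X),
      ∀ k, ∀ᵐ ω ∂μ, ω ∈ A k → g (DX.concat A hA x) ω = g (x k) ω) ∧
    -- (3) g is sequentially upper semi-continuous
    (∀ (x : ℕ → X) (x₀ : X), DX.TendstoAE x x₀ →
      ∀ᵐ ω ∂μ, limsup (fun k => g (x k) ω) atTop ≤ g x₀ ω) := by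
  classical
  -- stable evaluation of `f` along measurable subsequences
  have hfeval : ∀ (x : ℕ → X) (z : ℕ → Z) (n : Ω → ℕ) (hn : Measurable[G] n),
      ∀ᵐ ω ∂μ, f (DX.subseq x n hn) (DZ.subseq z n hn) ω = f (x (n ω)) (z (n ω)) ω := by
    intro x z n hn
    have h := ae_all_iff.2 fun j =>
      hfstable (fun j => {ω | n ω = j}) (CondMetric.isCondPartition_level hn μ) x z j
    filter_upwards [h] with ω hω
    exact hω (n ω) rfl
  have hfevalc : ∀ (x : X) (z : ℕ → Z) (n : Ω → ℕ) (hn : Measurable[G] n),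
      ∀ᵐ ω ∂μ, f x (DZ.subseq z n hn) ω = f x (z (n ω)) ω := by
    intro x z n hn
    have h := hfeval (fun _ => x) z n hn
    rwa [show DX.subseq (fun _ => x) n hn = x from DX.concat_const _ _ x] at h
  -- Part (2): stability of g
  have part2 : ∀ (A : ℕ → Set Ω) (hA : IsCondPartition μ G A) (x : ℕ → X),
      ∀ k, ∀ᵐ ω ∂μ, ω ∈ A k → g (DX.concat A hA x) ω = g (x k) ω := by
    intro A hA x k
    set xb := DX.concat A hA x with hxb
    have hΘ : Θ xb = {w | ∃ z : ℕ → Z, (∀ k, z k ∈ Θ (x k)) ∧ w = DZ.concat A hA z} := by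
      rw [hxb]; exact hc2 A hA x
    have hb1 : ∀ᵐ ω ∂μ, g xb ω ≤ (fun ω => if ω ∈ A k then g (x k) ω else g xb ω) ω := by
      refine (hg xb).2.2 _ ?_ ?_
      · exact Measurable.ite (hA.1 k) (hg (x k)).1 (hg xb).1
      · intro z hz
        rw [hΘ] at hz
        obtain ⟨zs, hzs, rfl⟩ := hz
        filter_upwards [hfstable A hA x zs k, (hg (x k)).2.1 (zs k) (hzs k),
          (hg xb).2.1 _ (by rw [hΘ]; exact ⟨zs, hzs, rfl⟩)] with ω h1 h2 h3
        by_cases hω : ω ∈ A k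
        · rw [if_pos hω]
          calc f xb (DZ.concat A hA zs) ω = f (x k) (zs k) ω := h1 hω
            _ ≤ g (x k) ω := h2
        · rw [if_neg hω]; exact h3
    choose sel hselmem using fun j => hc1 (x j)
    have hb2 : ∀ᵐ ω ∂μ, g (x k) ω ≤ (fun ω => if ω ∈ A k then g xb ω else g (x k) ω) ω := by
      refine (hg (x k)).2.2 _ ?_ ?_
      · exact Measurable.ite (hA.1 k) (hg xb).1 (hg (x k)).1
      · intro z hz
        set zs : ℕ → Z := fun j => if j = k then z else sel j with hzsdef
        have hzsmem : ∀ j, zs j ∈ Θ (x j) := by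
          intro j
          simp only [hzsdef]
          split_ifs with h
          · rw [h]; exact hz
          · exact hselmem j
        have hzbmem : DZ.concat A hA zs ∈ Θ xb := by
          rw [hΘ]; exact ⟨zs, hzsmem, rfl⟩
        filter_upwards [hfstable A hA x zs k, (hg xb).2.1 _ hzbmem,
          (hg (x k)).2.1 z hz] with ω h1 h2 h3
        by_cases hω : ω ∈ A k
        · rw [if_pos hω]
          have he : f (x k) z ω = f xb (DZ.concat A hA zs) ω := by
            rw [h1 hω]
            simp [hzsdef]
          rw [he]; exact h2
        · rw [if_neg hω]; exact h3
    filter_upwards [hb1, hb2] with ω h1 h2 hω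
    simp only [if_pos hω] at h1 h2
    exact le_antisymm h1 h2
  -- evaluation of g along measurable subsequences
  have hgeval : ∀ (x : ℕ → X) (n : Ω → ℕ) (hn : Measurable[G] n),
      ∀ᵐ ω ∂μ, g (DX.subseq x n hn) ω = g (x (n ω)) ω := by
    intro x n hn
    have h := ae_all_iff.2 fun j =>
      part2 (fun j => {ω | n ω = j}) (CondMetric.isCondPartition_level hn μ) x j
    filter_upwards [h] with ω hω
    exact hω (n ω) rfl
  -- Part (1): attainment
  have part1 : ∀ x : X, ∃ z₀ ∈ Θ x, g x =ᵐ[μ] f x z₀ := by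
    intro x
    obtain ⟨w, hwmem, hwsup⟩ := exists_maximizing_seq hG x (hc1 x)
      (fun z => (hfL x z).1) ((hg x).2.1) ((hg x).2.2)
    have hmax : ∀ z1 z2 : {z // z ∈ Θ x},
        ∃ z3, z3 ∈ Θ x ∧ ∀ᵐ ω ∂μ, f x z3 ω = max (f x z1.1 ω) (f x z2.1 ω) := by
      intro z1 z2
      obtain ⟨z3, h1, h2⟩ := exists_max DX DZ hc2 hfstable (hfL x z1.1).1 (hfL x z2.1).1
        z1.2 z2.2
      exact ⟨z3, h1, h2⟩
    choose maxsel hmaxmem hmaxeq using hmax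
    set v : ℕ → {z // z ∈ Θ x} := fun nn => Nat.rec ⟨w 0, hwmem 0⟩
      (fun nn vn => ⟨maxsel vn ⟨w (nn + 1), hwmem (nn + 1)⟩,
        hmaxmem vn ⟨w (nn + 1), hwmem (nn + 1)⟩⟩) nn with hvdef
    have hveq : ∀ nn, ∀ᵐ ω ∂μ,
        f x (v (nn + 1)).1 ω = max (f x (v nn).1 ω) (f x (w (nn + 1)) ω) :=
      fun nn => hmaxeq (v nn) ⟨w (nn + 1), hwmem (nn + 1)⟩
    have hvbound : ∀ nn, ∀ᵐ ω ∂μ, f x (v nn).1 ω ≤ g x ω :=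
      fun nn => (hg x).2.1 _ (v nn).2
    obtain ⟨N, z₀, hz₀mem, hconv⟩ := hc3 x (fun nn => (v nn).1) (fun nn => (v nn).2)
    have husc := hfusc (fun _ => x) x
      (fun k => DZ.subseq (fun nn => (v nn).1) (N.n k) (N.meas k)) z₀
      (DX.tendstoAE_const x) hconv
    have heval := ae_all_iff.2 fun k => hfevalc x (fun nn => (v nn).1) (N.n k) (N.meas k)
    refine ⟨z₀, hz₀mem, ?_⟩
    filter_upwards [husc, heval, hwsup, N.le_apply, ae_all_iff.2 hveq,
      ae_all_iff.2 hvbound, (hg x).2.1 z₀ hz₀mem] with ω h1 h2 h3 h4 h5 h6 h8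
    set c : ℕ → EReal := fun nn => f x (v nn).1 ω with hcdef
    have hcmono : Monotone c := by
      refine monotone_nat_of_le_succ fun nn => ?_
      show f x (v nn).1 ω ≤ f x (v (nn + 1)).1 ω
      rw [h5 nn]
      exact le_max_left _ _
    have hcw : ∀ nn, f x (w nn) ω ≤ c nn := by
      intro nn
      cases nn with
      | zero => exact le_of_eq rfl
      | succ nn =>
        show f x (w (nn + 1)) ω ≤ f x (v (nn + 1)).1 ω
        rw [h5 nn]
        exact le_max_right _ _
    have hsup_le : (⨆ nn, c nn) ≤ g x ω := iSup_le h6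
    have hge : g x ω ≤ ⨆ nn, c nn := by
      rw [h3]
      exact iSup_mono hcw
    have htend : Tendsto c atTop (𝓝 (⨆ nn, c nn)) := tendsto_atTop_iSup hcmono
    have hfirst : g x ω ≤ liminf (fun k => c (N.n k ω)) atTop := by
      calc g x ω ≤ ⨆ nn, c nn := hge
        _ = liminf c atTop := htend.liminf_eq.symm
        _ ≤ liminf (fun k => c (N.n k ω)) atTop := liminf_comp_ge h4
    have hsecond : liminf (fun k => c (N.n k ω)) atTop ≤ f x z₀ ω := by
      calc liminf (fun k => c (N.n k ω)) atTop
          ≤ limsup (fun k => c (N.n k ω)) atTop := liminf_le_limsup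
        _ = limsup (fun k =>
              f x (DZ.subseq (fun nn => (v nn).1) (N.n k) (N.meas k)) ω) atTop := by
            congr 1
            funext k
            exact (h2 k).symm
        _ ≤ f x z₀ ω := h1
    exact le_antisymm (le_trans hfirst hsecond) h8
  refine ⟨part1, part2, ?_⟩
  -- Part (3): sequential upper semi-continuity of g
  intro x x₀ hx
  obtain ⟨N1, hN1⟩ := exists_midx_liminf (G := G) μ (fun nn => g (x nn))
    (fun nn => (hg (x nn)).1)
  set x' : ℕ → X := fun k => DX.subseq x (N1.n k) (N1.meas k) with hx'def
  have hx' : DX.TendstoAE x' x₀ := DX.tendstoAE_subseq hx N1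
  choose z' hz'mem hz'eq using fun k => part1 (x' k)
  obtain ⟨N2, w, hwmem, hdzw⟩ := hc4 x' x₀ hx' z' hz'mem
  obtain ⟨N3, z₀, hz₀mem, hwz₀⟩ := hc3 x₀ w hwmem
  set x'' : ℕ → X := fun j => DX.subseq x' (N2.n j) (N2.meas j) with hx''def
  set z'' : ℕ → Z := fun j => DZ.subseq z' (N2.n j) (N2.meas j) with hz''def
  have hX3 : DX.TendstoAE (fun i => DX.subseq x'' (N3.n i) (N3.meas i)) x₀ :=
    DX.tendstoAE_subseq (DX.tendstoAE_subseq hx' N2) N3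
  have hZ3 : DZ.TendstoAE (fun i => DZ.subseq z'' (N3.n i) (N3.meas i)) z₀ := by
    have htri := ae_all_iff.2 fun i => DZ.triangle z₀ (DZ.subseq w (N3.n i) (N3.meas i))
      (DZ.subseq z'' (N3.n i) (N3.meas i))
    have heq2 := ae_all_iff.2 fun i => DZ.d_subseq_subseq w z'' (N3.n i) (N3.meas i)
    have hsymm := ae_all_iff.2 fun j => DZ.symm (z'' j) (w j)
    have hnn := ae_all_iff.2 fun i => DZ.nonneg z₀ (DZ.subseq z'' (N3.n i) (N3.meas i))
    filter_upwards [hwz₀, hdzw, htri, heq2, hsymm, hnn, N3.le_apply]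
      with ω h1 h2 h3 h4 h5 h6 h7
    have hcomp : Tendsto (fun i => N3.n i ω) atTop atTop := tendsto_atTop_mono h7 tendsto_id
    have hterm : Tendsto (fun i => DZ.d (w (N3.n i ω)) (z'' (N3.n i ω)) ω) atTop (𝓝 0) :=
      (h2.comp hcomp).congr fun i => h5 (N3.n i ω)
    have hsum : Tendsto (fun i => DZ.d z₀ (DZ.subseq w (N3.n i) (N3.meas i)) ω
        + DZ.d (w (N3.n i ω)) (z'' (N3.n i ω)) ω) atTop (𝓝 0) := by
      have := h1.add hterm
      simpa using this
    refine squeeze_zero (fun i => h6 i) (fun i => ?_) hsum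
    calc DZ.d z₀ (DZ.subseq z'' (N3.n i) (N3.meas i)) ω
        ≤ DZ.d z₀ (DZ.subseq w (N3.n i) (N3.meas i)) ω
          + DZ.d (DZ.subseq w (N3.n i) (N3.meas i)) (DZ.subseq z'' (N3.n i) (N3.meas i)) ω :=
          h3 i
      _ = DZ.d z₀ (DZ.subseq w (N3.n i) (N3.meas i)) ω
          + DZ.d (w (N3.n i ω)) (z'' (N3.n i ω)) ω := by rw [h4 i]
  have husc := hfusc (fun i => DX.subseq x'' (N3.n i) (N3.meas i))
    x₀ (fun i => DZ.subseq z'' (N3.n i) (N3.meas i)) z₀ hX3 hZ3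
  have hfX3 : ∀ i, ∀ᵐ ω ∂μ,
      f (DX.subseq x'' (N3.n i) (N3.meas i)) (DZ.subseq z'' (N3.n i) (N3.meas i)) ω
        = f (x'' (N3.n i ω)) (z'' (N3.n i ω)) ω := fun i => hfeval x'' z'' (N3.n i) (N3.meas i)
  have hfx'' : ∀ j, ∀ᵐ ω ∂μ,
      f (x'' j) (z'' j) ω = f (x' (N2.n j ω)) (z' (N2.n j ω)) ω :=
    fun j => hfeval x' z' (N2.n j) (N2.meas j)
  have hgx' : ∀ k, ∀ᵐ ω ∂μ, g (x' k) ω = g (x (N1.n k ω)) ω :=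
    fun k => hgeval x (N1.n k) (N1.meas k)
  filter_upwards [husc, ae_all_iff.2 hfX3, ae_all_iff.2 hfx'', ae_all_iff.2 hgx',
    ae_all_iff.2 fun k => hz'eq k, N2.le_apply, N3.le_apply, (hg x₀).2.1 z₀ hz₀mem]
    with ω h1 h2 h3 h4 h5 h6 h7 h8
  have hbig : ∀ i, f (DX.subseq x'' (N3.n i) (N3.meas i))
      (DZ.subseq z'' (N3.n i) (N3.meas i)) ω = g (x (N1.n (N2.n (N3.n i ω) ω) ω)) ω := by
    intro i
    rw [h2 i, h3 (N3.n i ω), ← h5 (N2.n (N3.n i ω) ω)]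
    exact h4 (N2.n (N3.n i ω) ω)
  have hk : ∀ i, i ≤ N2.n (N3.n i ω) ω := fun i => le_trans (h7 i) (h6 (N3.n i ω))
  calc limsup (fun k => g (x k) ω) atTop
      ≤ liminf (fun k => g (x (N1.n k ω)) ω) atTop := hN1 ω
    _ ≤ liminf (fun i => g (x (N1.n (N2.n (N3.n i ω) ω) ω)) ω) atTop := liminf_comp_ge hk
    _ ≤ limsup (fun i => g (x (N1.n (N2.n (N3.n i ω) ω) ω)) ω) atTop := liminf_le_limsup
    _ = limsup (fun i => f (DX.subseq x'' (N3.n i) (N3.meas i))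
          (DZ.subseq z'' (N3.n i) (N3.meas i)) ω) atTop := by
        congr 1
        funext i
        exact (hbig i).symm
    _ ≤ f x₀ z₀ ω := h1
    _ ≤ g x₀ ω := h8

end CondPaper
end

section
/- Under the hypotheses of the unbounded-control-set result (forward generators satisfying (v1)–(v6), backward generators satisfying (u1), (u2′), (u3)–(u7), u_T the identity, and ess sup_{z ∈ L⁰_t(ℝ^d)} u_t(x, v_t(x,z), z) − x ≤ K for all t and x ∈ L⁰_t for a constant K > 0), the value functions satisfy the two-sided bound 0 ≤ y_t(x) − x ≤ (T−t)·K for all t = 0,…,T and all x ∈ L⁰_t. -/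
open MeasureTheory Filter Topology Set

namespace CondPaper

variable {Ω : Type*}

/-- The recursively defined objective of a plan in the concrete setting
`Xₜ = L⁰ₜ`, `Zₜ = L⁰ₜ(ℝ^d)` with `u_T = id`: `rewardR T u xs zs k` is the value at time
`T - k`. -/
def rewardR (d T : ℕ)
    (u : ℕ → (Ω → ℝ) → (Ω → EReal) → (Ω → EuclideanSpace ℝ (Fin d)) → Ω → EReal)
    (xs : ℕ → Ω → ℝ) (zs : ℕ → Ω → EuclideanSpace ℝ (Fin d)) : ℕ → Ω → EReal
  | 0 => fun ω => ((xs T ω : ℝ) : EReal)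
  | k + 1 => u (T - (k + 1)) (xs (T - (k + 1)))
      (rewardR d T u xs zs k) (zs (T - (k + 1)))

/-- A plan in `C_t(x)` (unconstrained controls): an adapted state/control process
started at `x` at time `t` and following the forward dynamics `v`. -/
def IsPlanR {_ : MeasurableSpace Ω} (μ : Measure Ω) (d : ℕ)
    (F : ℕ → MeasurableSpace Ω)
    (v : ℕ → (Ω → ℝ) → (Ω → EuclideanSpace ℝ (Fin d)) → Ω → ℝ)
    (T t : ℕ) (x : Ω → ℝ) (xs : ℕ → Ω → ℝ)
    (zs : ℕ → Ω → EuclideanSpace ℝ (Fin d)) : Prop :=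
  (∀ s, t ≤ s → s ≤ T → Measurable[F s] (xs s)) ∧
  (∀ s, t ≤ s → s < T → Measurable[F s] (zs s)) ∧
  xs t =ᵐ[μ] x ∧
  ∀ s, t ≤ s → s < T → xs (s + 1) =ᵐ[μ] v s (xs s) (zs s)

end CondPaper

/-!
The zero-control plan keeps the state at `x`, and since every `uₜ` is monotone, cash-additive and
normalised, its reward is at least `x`; hence `yₜ(x) ≥ x`. Conversely, backward induction along any
plan bounds the reward from time `s` by `xₛ + (T - s) K`: if the continuation reward is at most
`x_{s+1} + c = vₛ(xₛ, zₛ) + c`, monotonicity and cash-additivity of `uₛ` together with the uniform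
bound give `uₛ(xₛ, ·, zₛ) ≤ xₛ + K + c`.
-/

namespace CondPaper

section MonetaryFunctional

variable {Ω : Type*} {m : MeasurableSpace Ω} {μ : Measure Ω} {G : MeasurableSpace Ω}
  {g : (Ω → EReal) → Ω → EReal}

lemma coe_le_apply_of_coe_le (hmono : ∀ y y', y ≤ᵐ[μ] y' → g y ≤ᵐ[μ] g y')
    (htransl : ∀ (y : Ω → EReal) (c : Ω → ℝ), Measurable[G] c →
      g (fun ω => y ω + (c ω : EReal)) =ᵐ[μ] fun ω => g y ω + (c ω : EReal))
    (hzero : g (fun _ => 0) =ᵐ[μ] fun _ => 0) {c : Ω → ℝ} (hc : Measurable[G] c)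
    {y : Ω → EReal} (hy : (fun ω => (c ω : EReal)) ≤ᵐ[μ] y) :
    (fun ω => (c ω : EReal)) ≤ᵐ[μ] g y := by
  have hgc : g (fun ω => (c ω : EReal)) =ᵐ[μ] fun ω => (c ω : EReal) := by
    filter_upwards [htransl (fun _ => 0) c hc, hzero] with ω htc h0
    simpa only [zero_add, h0] using htc
  filter_upwards [hgc, hmono _ _ hy] with ω hgc hmono
  exact hgc ▸ hmono

lemma apply_le_add_of_le_add (hmono : ∀ y y', y ≤ᵐ[μ] y' → g y ≤ᵐ[μ] g y')
    (htransl : ∀ (y : Ω → EReal) (c : Ω → ℝ), Measurable[G] c →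
      g (fun ω => y ω + (c ω : EReal)) =ᵐ[μ] fun ω => g y ω + (c ω : EReal))
    {y y' b : Ω → EReal} {c : ℝ} (hy : y ≤ᵐ[μ] fun ω => y' ω + c) (hb : g y' ≤ᵐ[μ] b) :
    g y ≤ᵐ[μ] fun ω => b ω + c := by
  filter_upwards [hmono _ _ hy, htransl y' (fun _ => c) measurable_const, hb]
    with ω hmono htransl hb
  exact hmono.trans (htransl.trans_le (add_le_add_left hb _))

end MonetaryFunctional

section Plans

variable {Ω : Type*} {m : MeasurableSpace Ω} {μ : Measure Ω} {d T : ℕ}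
  {F : ℕ → MeasurableSpace Ω}
  {u : ℕ → (Ω → ℝ) → (Ω → EReal) → (Ω → EuclideanSpace ℝ (Fin d)) → Ω → EReal}
  {v : ℕ → (Ω → ℝ) → (Ω → EuclideanSpace ℝ (Fin d)) → Ω → ℝ}

lemma isPlanR_zero_control (hFmono : Monotone F)
    (hv6 : ∀ t < T, ∀ x : Ω → ℝ, v t x (fun _ => 0) =ᵐ[μ] x)
    {t : ℕ} {x : Ω → ℝ} (hx : Measurable[F t] x) :
    IsPlanR μ d F v T t x (fun _ => x) (fun _ _ => 0) :=
  ⟨fun _ hts _ => hx.mono (hFmono hts) le_rfl, fun _ _ _ => measurable_const,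
    EventuallyEq.rfl, fun s _ hsT => (hv6 s hsT x).symm⟩

lemma coe_le_rewardR_zero_control (hFmono : Monotone F)
    (hu2' : ∀ t < T, ∀ (x x' : Ω → ℝ) (y y' : Ω → EReal)
      (z : Ω → EuclideanSpace ℝ (Fin d)),
      x ≤ᵐ[μ] x' → y ≤ᵐ[μ] y' → u t x y z ≤ᵐ[μ] u t x' y' z)
    (hu5 : ∀ t < T, ∀ (x : Ω → ℝ) (y : Ω → EReal)
      (z : Ω → EuclideanSpace ℝ (Fin d)) (c : Ω → ℝ), Measurable[F t] c →
      u t x (fun ω => y ω + (c ω : EReal)) z =ᵐ[μ]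
        fun ω => u t x y z ω + (c ω : EReal))
    (hu7 : ∀ t < T, ∀ x : Ω → ℝ,
      u t x (fun _ => (0 : EReal)) (fun _ => 0) =ᵐ[μ] fun _ => (0 : EReal))
    {t : ℕ} {x : Ω → ℝ} (hx : Measurable[F t] x) :
    ∀ k ≤ T - t, (fun ω => (x ω : EReal)) ≤ᵐ[μ] rewardR d T u (fun _ => x) (fun _ _ => 0) k
  | 0, _ => EventuallyLE.refl _ _
  | k + 1, hk => by
    have hsT : T - (k + 1) < T := by omega
    have hts : t ≤ T - (k + 1) := by omega
    exact coe_le_apply_of_coe_le (fun y y' hy => hu2' _ hsT x x y y' _ (EventuallyLE.refl _ _) hy)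
      (fun y c hc => hu5 _ hsT x y _ c hc) (hu7 _ hsT x) (hx.mono (hFmono hts) le_rfl)
      (coe_le_rewardR_zero_control hFmono hu2' hu5 hu7 hx k (by omega))

lemma rewardR_le_of_isPlanR (hu2' : ∀ t < T, ∀ (x x' : Ω → ℝ) (y y' : Ω → EReal)
      (z : Ω → EuclideanSpace ℝ (Fin d)),
      x ≤ᵐ[μ] x' → y ≤ᵐ[μ] y' → u t x y z ≤ᵐ[μ] u t x' y' z)
    (hu5 : ∀ t < T, ∀ (x : Ω → ℝ) (y : Ω → EReal)
      (z : Ω → EuclideanSpace ℝ (Fin d)) (c : Ω → ℝ), Measurable[F t] c →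
      u t x (fun ω => y ω + (c ω : EReal)) z =ᵐ[μ]
        fun ω => u t x y z ω + (c ω : EReal))
    {K : ℝ} (hK : ∀ t < T, ∀ (x : Ω → ℝ) (z : Ω → EuclideanSpace ℝ (Fin d)),
      Measurable[F t] x → Measurable[F t] z →
      ∀ᵐ ω ∂μ, u t x (fun ω' => ((v t x z ω' : ℝ) : EReal)) z ω ≤
        ((x ω + K : ℝ) : EReal))
    {t : ℕ} {x : Ω → ℝ} {xs : ℕ → Ω → ℝ} {zs : ℕ → Ω → EuclideanSpace ℝ (Fin d)}
    (hplan : IsPlanR μ d F v T t x xs zs) :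
    ∀ k ≤ T - t, rewardR d T u xs zs k ≤ᵐ[μ] fun ω => ((xs (T - k) ω + k * K : ℝ) : EReal)
  | 0, _ => Eventually.of_forall fun ω => by simp [rewardR]
  | k + 1, hk => by
    have hprev := rewardR_le_of_isPlanR hu2' hu5 hK hplan k (by omega)
    obtain ⟨hxs, hzs, -, hdyn⟩ := hplan
    set s := T - (k + 1)
    have hsT : s < T := by omega
    have hts : t ≤ s := by omega
    have hTk : T - k = s + 1 := by omega
    have hnext : rewardR d T u xs zs k ≤ᵐ[μ]
        fun ω => ((v s (xs s) (zs s) ω : ℝ) : EReal) + ((k * K : ℝ) : EReal) := by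
      filter_upwards [hprev, hdyn s hts hsT] with ω hle heq
      rwa [hTk, heq, EReal.coe_add] at hle
    filter_upwards [apply_le_add_of_le_add
      (fun y y' hy => hu2' _ hsT (xs s) (xs s) y y' (zs s) (EventuallyLE.refl _ _) hy)
      (fun y c hc => hu5 _ hsT (xs s) y (zs s) c hc) hnext
      (hK s hsT (xs s) (zs s) (hxs s hts hsT.le) (hzs s hts hsT))] with ω h
    refine h.trans_eq ?_
    rw [← EReal.coe_add]
    congr 1
    push_cast
    ring

end Plans

theorem value_function_bounds_general {Ω : Type*} {m : MeasurableSpace Ω} {μ : Measure Ω}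
    (d T : ℕ) (F : ℕ → MeasurableSpace Ω)
    (hFmono : Monotone F)
    (v : ℕ → (Ω → ℝ) → (Ω → EuclideanSpace ℝ (Fin d)) → Ω → ℝ)
    -- (v6): vₜ(x,0) = x
    (hv6 : ∀ t < T, ∀ x : Ω → ℝ, v t x (fun _ => 0) =ᵐ[μ] x)
    (u : ℕ → (Ω → ℝ) → (Ω → EReal) → (Ω → EuclideanSpace ℝ (Fin d)) → Ω → EReal)
    -- (u2'): monotonicity in the first and second components
    (hu2' : ∀ t < T, ∀ (x x' : Ω → ℝ) (y y' : Ω → EReal)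
      (z : Ω → EuclideanSpace ℝ (Fin d)),
      x ≤ᵐ[μ] x' → y ≤ᵐ[μ] y' → u t x y z ≤ᵐ[μ] u t x' y' z)
    -- (u5): 𝓕ₜ-translation invariance in the second component
    (hu5 : ∀ t < T, ∀ (x : Ω → ℝ) (y : Ω → EReal)
      (z : Ω → EuclideanSpace ℝ (Fin d)) (c : Ω → ℝ), Measurable[F t] c →
      u t x (fun ω => y ω + (c ω : EReal)) z =ᵐ[μ]
        fun ω => u t x y z ω + (c ω : EReal))
    -- (u7): uₜ(x,0,0) = 0
    (hu7 : ∀ t < T, ∀ x : Ω → ℝ,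
      u t x (fun _ => (0 : EReal)) (fun _ => 0) =ᵐ[μ] fun _ => (0 : EReal))
    -- the uniform bound: ess sup_z uₜ(x, vₜ(x,z), z) - x ≤ K
    (K : ℝ)
    (hK : ∀ t < T, ∀ (x : Ω → ℝ) (z : Ω → EuclideanSpace ℝ (Fin d)),
      Measurable[F t] x → Measurable[F t] z →
      ∀ᵐ ω ∂μ, u t x (fun ω' => ((v t x z ω' : ℝ) : EReal)) z ω ≤
        ((x ω + K : ℝ) : EReal))
    -- the value functions, given by an essential supremum over all plans
    (Y : ℕ → (Ω → ℝ) → Ω → EReal)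
    (hY : ∀ t ≤ T, ∀ x : Ω → ℝ, Measurable[F t] x →
      Measurable[F t] (Y t x) ∧
      (∀ (xs : ℕ → Ω → ℝ) (zs : ℕ → Ω → EuclideanSpace ℝ (Fin d)),
        IsPlanR μ d F v T t x xs zs →
        ∀ᵐ ω ∂μ, rewardR d T u xs zs (T - t) ω ≤ Y t x ω) ∧
      (∀ b : Ω → EReal, Measurable[F t] b →
        (∀ (xs : ℕ → Ω → ℝ) (zs : ℕ → Ω → EuclideanSpace ℝ (Fin d)),
          IsPlanR μ d F v T t x xs zs →
          ∀ᵐ ω ∂μ, rewardR d T u xs zs (T - t) ω ≤ b ω) →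
        ∀ᵐ ω ∂μ, Y t x ω ≤ b ω)) :
    ∀ t ≤ T, ∀ x : Ω → ℝ, Measurable[F t] x →
      ∀ᵐ ω ∂μ, ((x ω : ℝ) : EReal) ≤ Y t x ω ∧
        Y t x ω ≤ ((x ω + (T - t : ℕ) * K : ℝ) : EReal) := by
  intro t ht x hx
  obtain ⟨-, hYge, hYle⟩ := hY t ht x hx
  have hlower : ∀ᵐ ω ∂μ, ((x ω : ℝ) : EReal) ≤ Y t x ω := by
    filter_upwards [coe_le_rewardR_zero_control hFmono hu2' hu5 hu7 hx (T - t) le_rfl,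
      hYge _ _ (isPlanR_zero_control hFmono hv6 hx)] with ω h hY
    exact h.trans hY
  have hupper : ∀ᵐ ω ∂μ, Y t x ω ≤ ((x ω + (T - t : ℕ) * K : ℝ) : EReal) := by
    refine hYle _ (measurable_coe_real_ereal.comp (hx.add measurable_const)) ?_
    intro xs zs hplan
    have hTt : T - (T - t) = t := by omega
    filter_upwards [rewardR_le_of_isPlanR hu2' hu5 hK hplan (T - t) le_rfl,
      hplan.2.2.1] with ω h hstart
    rwa [hTt, hstart] at h
  filter_upwards [hlower, hupper] with ω h₁ h₂
  exact ⟨h₁, h₂⟩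

/-- **Two-sided bound on the value functions (step of the proof of Proposition 4.1).**
Under the hypotheses of the unbounded-control-set result, the value functions satisfy
`0 ≤ y_t(x) - x ≤ (T - t)·K` a.s. for all `t = 0, …, T` and all `x ∈ L⁰ₜ`. -/
theorem value_function_bounds {Ω : Type*} {m : MeasurableSpace Ω} {μ : Measure Ω}
    [IsProbabilityMeasure μ]
    (d T : ℕ) (F : ℕ → MeasurableSpace Ω)
    (hFmono : Monotone F) (hFm : ∀ t, F t ≤ m) (hFT : F T = m)
    (v : ℕ → (Ω → ℝ) → (Ω → EuclideanSpace ℝ (Fin d)) → Ω → ℝ)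
    -- vₜ maps L⁰ₜ × L⁰ₜ(ℝ^d) into L⁰_{t+1}, and respects a.e. equality
    (hvmeas : ∀ t < T, ∀ (x : Ω → ℝ) (z : Ω → EuclideanSpace ℝ (Fin d)),
      Measurable[F t] x → Measurable[F t] z → Measurable[F (t + 1)] (v t x z))
    (hvae : ∀ t < T, ∀ (x x' : Ω → ℝ) (z z' : Ω → EuclideanSpace ℝ (Fin d)),
      x =ᵐ[μ] x' → z =ᵐ[μ] z' → v t x z =ᵐ[μ] v t x' z')
    -- (v1): 𝓕ₜ-stability
    (hv1 : ∀ t < T, ∀ (A : ℕ → Set Ω), IsCondPartition μ (F t) A →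
      ∀ (xk : ℕ → Ω → ℝ) (zk : ℕ → Ω → EuclideanSpace ℝ (Fin d))
        (x₀ : Ω → ℝ) (z₀ : Ω → EuclideanSpace ℝ (Fin d)),
      (∀ k, ∀ᵐ ω ∂μ, ω ∈ A k → x₀ ω = xk k ω) →
      (∀ k, ∀ᵐ ω ∂μ, ω ∈ A k → z₀ ω = zk k ω) →
      ∀ k, ∀ᵐ ω ∂μ, ω ∈ A k → v t x₀ z₀ ω = v t (xk k) (zk k) ω)
    -- (v2): sequential continuity
    (hv2 : ∀ t < T, ∀ (xk : ℕ → Ω → ℝ) (x₀ : Ω → ℝ)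
      (zk : ℕ → Ω → EuclideanSpace ℝ (Fin d)) (z₀ : Ω → EuclideanSpace ℝ (Fin d)),
      (∀ᵐ ω ∂μ, Filter.Tendsto (fun k => xk k ω) Filter.atTop (nhds (x₀ ω))) →
      (∀ᵐ ω ∂μ, Filter.Tendsto (fun k => zk k ω) Filter.atTop (nhds (z₀ ω))) →
      ∀ᵐ ω ∂μ, Filter.Tendsto (fun k => v t (xk k) (zk k) ω) Filter.atTop
        (nhds (v t x₀ z₀ ω)))
    -- (v3): monotonicity in the first component
    (hv3 : ∀ t < T, ∀ (x x' : Ω → ℝ) (z : Ω → EuclideanSpace ℝ (Fin d)),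
      x ≤ᵐ[μ] x' → v t x z ≤ᵐ[μ] v t x' z)
    -- (v4): concavity in the control
    (hv4 : ∀ t < T, ∀ (x : Ω → ℝ) (z z' : Ω → EuclideanSpace ℝ (Fin d))
      (lam : Ω → ℝ), Measurable[F t] lam → (∀ᵐ ω ∂μ, 0 ≤ lam ω ∧ lam ω ≤ 1) →
      ∀ᵐ ω ∂μ, lam ω * v t x z ω + (1 - lam ω) * v t x z' ω ≤
        v t x (fun ω' => lam ω' • z ω' + (1 - lam ω') • z' ω') ω)
    -- (v5): ℙ(vₜ(x,z) < x | 𝓕ₜ) > 0 on {z ≠ 0}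
    (hv5 : ∀ t < T, ∀ (x : Ω → ℝ) (z : Ω → EuclideanSpace ℝ (Fin d)),
      Measurable[F t] x → Measurable[F t] z →
      ∀ B : Set Ω, MeasurableSet[F t] B → μ (B \ {ω | z ω ≠ 0}) = 0 → 0 < μ B →
        0 < μ (B ∩ {ω | v t x z ω < x ω}))
    -- (v6): vₜ(x,0) = x
    (hv6 : ∀ t < T, ∀ x : Ω → ℝ, v t x (fun _ => 0) =ᵐ[μ] x)
    (u : ℕ → (Ω → ℝ) → (Ω → EReal) → (Ω → EuclideanSpace ℝ (Fin d)) → Ω → EReal)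
    -- uₜ maps L⁰ₜ × L̲⁰_{t+1} × L⁰ₜ(ℝ^d) into L̲⁰ₜ, and respects a.e. equality
    (huL : ∀ t < T, ∀ (x : Ω → ℝ) (y : Ω → EReal) (z : Ω → EuclideanSpace ℝ (Fin d)),
      Measurable[F t] x → InLbar μ (F (t + 1)) y → Measurable[F t] z →
      InLbar μ (F t) (u t x y z))
    (huae : ∀ t < T, ∀ (x x' : Ω → ℝ) (y y' : Ω → EReal)
      (z z' : Ω → EuclideanSpace ℝ (Fin d)),
      x =ᵐ[μ] x' → y =ᵐ[μ] y' → z =ᵐ[μ] z' → u t x y z =ᵐ[μ] u t x' y' z')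
    -- (u1): 𝓕ₜ-stability
    (hu1 : ∀ t < T, ∀ (A : ℕ → Set Ω), IsCondPartition μ (F t) A →
      ∀ (xk : ℕ → Ω → ℝ) (yk : ℕ → Ω → EReal)
        (zk : ℕ → Ω → EuclideanSpace ℝ (Fin d))
        (x₀ : Ω → ℝ) (y₀ : Ω → EReal) (z₀ : Ω → EuclideanSpace ℝ (Fin d)),
      (∀ k, ∀ᵐ ω ∂μ, ω ∈ A k → x₀ ω = xk k ω) →
      (∀ k, ∀ᵐ ω ∂μ, ω ∈ A k → y₀ ω = yk k ω) →
      (∀ k, ∀ᵐ ω ∂μ, ω ∈ A k → z₀ ω = zk k ω) →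
      ∀ k, ∀ᵐ ω ∂μ, ω ∈ A k → u t x₀ y₀ z₀ ω = u t (xk k) (yk k) (zk k) ω)
    -- (u2'): monotonicity in the first and second components
    (hu2' : ∀ t < T, ∀ (x x' : Ω → ℝ) (y y' : Ω → EReal)
      (z : Ω → EuclideanSpace ℝ (Fin d)),
      x ≤ᵐ[μ] x' → y ≤ᵐ[μ] y' → u t x y z ≤ᵐ[μ] u t x' y' z)
    -- (u3): sequential upper semi-continuity
    (hu3 : ∀ t < T, ∀ (xk : ℕ → Ω → ℝ) (x₀ : Ω → ℝ) (yk : ℕ → Ω → EReal)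
      (y₀ : Ω → EReal) (zk : ℕ → Ω → EuclideanSpace ℝ (Fin d))
      (z₀ : Ω → EuclideanSpace ℝ (Fin d)),
      (∀ᵐ ω ∂μ, Filter.Tendsto (fun k => xk k ω) Filter.atTop (nhds (x₀ ω))) →
      (∀ᵐ ω ∂μ, Filter.Tendsto (fun k => yk k ω) Filter.atTop (nhds (y₀ ω))) →
      (∀ᵐ ω ∂μ, Filter.Tendsto (fun k => zk k ω) Filter.atTop (nhds (z₀ ω))) →
      ∀ᵐ ω ∂μ, Filter.limsup (fun k => u t (xk k) (yk k) (zk k) ω) Filter.atTop ≤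
        u t x₀ y₀ z₀ ω)
    -- (u4): quasi-concavity
    (hu4 : ∀ t < T, ∀ (x : Ω → ℝ) (y y' : Ω → EReal)
      (z z' : Ω → EuclideanSpace ℝ (Fin d)) (lam : Ω → ℝ),
      Measurable[F t] lam → (∀ᵐ ω ∂μ, 0 ≤ lam ω ∧ lam ω ≤ 1) →
      ∀ᵐ ω ∂μ, min (u t x y z ω) (u t x y' z' ω) ≤
        u t x (fun ω' => (lam ω' : EReal) * y ω' + ((1 - lam ω' : ℝ) : EReal) * y' ω')
          (fun ω' => lam ω' • z ω' + (1 - lam ω') • z' ω') ω)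
    -- (u5): 𝓕ₜ-translation invariance in the second component
    (hu5 : ∀ t < T, ∀ (x : Ω → ℝ) (y : Ω → EReal)
      (z : Ω → EuclideanSpace ℝ (Fin d)) (c : Ω → ℝ), Measurable[F t] c →
      u t x (fun ω => y ω + (c ω : EReal)) z =ᵐ[μ]
        fun ω => u t x y z ω + (c ω : EReal))
    -- (u6): sensitivity to large losses on {ℙ(y < 0 | 𝓕ₜ) > 0}
    (hu6 : ∀ t < T, ∀ (x : Ω → ℝ) (y : Ω → EReal)
      (z : Ω → EuclideanSpace ℝ (Fin d)),
      ∀ᵐ ω ∂μ, 0 < (μ[Set.indicator {ω' | y ω' < 0} (fun _ => (1 : ℝ)) | F t]) ω →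
        Filter.Tendsto
          (fun mm : ℕ => u t x (fun ω' => (mm : EReal) * y ω')
            (fun ω' => (mm : ℝ) • z ω') ω) Filter.atTop (nhds (⊥ : EReal)))
    -- (u7): uₜ(x,0,0) = 0
    (hu7 : ∀ t < T, ∀ x : Ω → ℝ,
      u t x (fun _ => (0 : EReal)) (fun _ => 0) =ᵐ[μ] fun _ => (0 : EReal))
    -- the uniform bound: ess sup_z uₜ(x, vₜ(x,z), z) - x ≤ K
    (K : ℝ) (hKpos : 0 < K)
    (hK : ∀ t < T, ∀ (x : Ω → ℝ) (z : Ω → EuclideanSpace ℝ (Fin d)),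
      Measurable[F t] x → Measurable[F t] z →
      ∀ᵐ ω ∂μ, u t x (fun ω' => ((v t x z ω' : ℝ) : EReal)) z ω ≤
        ((x ω + K : ℝ) : EReal))
    -- the value functions, given by an essential supremum over all plans
    (Y : ℕ → (Ω → ℝ) → Ω → EReal)
    (hY : ∀ t ≤ T, ∀ x : Ω → ℝ, Measurable[F t] x →
      Measurable[F t] (Y t x) ∧
      (∀ (xs : ℕ → Ω → ℝ) (zs : ℕ → Ω → EuclideanSpace ℝ (Fin d)),
        IsPlanR μ d F v T t x xs zs →
        ∀ᵐ ω ∂μ, rewardR d T u xs zs (T - t) ω ≤ Y t x ω) ∧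
      (∀ b : Ω → EReal, Measurable[F t] b →
        (∀ (xs : ℕ → Ω → ℝ) (zs : ℕ → Ω → EuclideanSpace ℝ (Fin d)),
          IsPlanR μ d F v T t x xs zs →
          ∀ᵐ ω ∂μ, rewardR d T u xs zs (T - t) ω ≤ b ω) →
        ∀ᵐ ω ∂μ, Y t x ω ≤ b ω)) :
    ∀ t ≤ T, ∀ x : Ω → ℝ, Measurable[F t] x →
      ∀ᵐ ω ∂μ, ((x ω : ℝ) : EReal) ≤ Y t x ω ∧
        Y t x ω ≤ ((x ω + (T - t : ℕ) * K : ℝ) : EReal) :=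
  value_function_bounds_general (m := m) d T F hFmono v hv6 u hu2' hu5 hu7 K hK Y hY

end CondPaper
end

section
/- Let g_t : L̲⁰_{t+1} → L̲⁰_t be increasing, 𝓕_t-concave, 𝓕_t-translation invariant, sequentially upper semi-continuous with g_t(0) = 0, and let γ_t : L⁰_t → L⁰_{t,++} be 𝓕_t-stable, decreasing and sequentially continuous. Then the function u_t : L⁰_t × L̲⁰_{t+1} → L̲⁰_t defined by u_t(x,y) := (1/γ_t(x))·g_t(γ_t(x)·y) satisfies: (a) u_t is increasing in both components, i.e. u_t(x₂,y₂) ≥ u_t(x₁,y₁) a.s. whenever x₁ ≤ x₂ and y₁ ≤ y₂; and (b) u_t is sequentially upper semi-continuous; in particular, if x_k ↓ x a.s. and y_k ↓ y a.s. then lim_{k→∞} u_t(x_k,y_k) = u_t(x,y) a.s. -/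
open MeasureTheory Filter Topology

namespace CondPaper

lemma measurable_coe_mul {α : Type*} {mα : MeasurableSpace α} {f : α → ℝ} {y : α → EReal}
    (hf : Measurable f) (hy : Measurable y) :
    Measurable fun a => (f a : EReal) * y a := by
  have h : (fun a => (f a : EReal) * y a) = fun a =>
      if y a = ⊤ then (if 0 < f a then (⊤ : EReal) else if f a < 0 then ⊥ else 0)
      else if y a = ⊥ then (if 0 < f a then (⊥ : EReal) else if f a < 0 then ⊤ else 0)
      else ((f a * (y a).toReal : ℝ) : EReal) := by
    funext a
    rcases eq_or_ne (y a) ⊤ with h1 | h1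
    · rw [if_pos h1, h1]
      rcases lt_trichotomy (f a) 0 with h2 | h2 | h2
      · rw [if_neg (not_lt.2 h2.le), if_pos h2, EReal.coe_mul_top_of_neg h2]
      · simp [h2]
      · rw [if_pos h2, EReal.coe_mul_top_of_pos h2]
    · rw [if_neg h1]
      rcases eq_or_ne (y a) ⊥ with h3 | h3
      · rw [if_pos h3, h3]
        rcases lt_trichotomy (f a) 0 with h2 | h2 | h2
        · rw [if_neg (not_lt.2 h2.le), if_pos h2, EReal.coe_mul_bot_of_neg h2]
        · simp [h2]
        · rw [if_pos h2, EReal.coe_mul_bot_of_pos h2]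
      · rw [if_neg h3]
        lift y a to ℝ using ⟨h1, h3⟩ with r
        rw [EReal.toReal_coe, ← EReal.coe_mul]
  rw [h]
  refine Measurable.ite (hy (measurableSet_singleton ⊤)) ?_
    (Measurable.ite (hy (measurableSet_singleton ⊥)) ?_ ?_)
  · exact Measurable.ite (measurableSet_lt measurable_const hf) measurable_const
      (Measurable.ite (measurableSet_lt hf measurable_const) measurable_const measurable_const)
  · exact Measurable.ite (measurableSet_lt measurable_const hf) measurable_const
      (Measurable.ite (measurableSet_lt hf measurable_const) measurable_const measurable_const)
  · exact (hf.mul hy.ereal_toReal).coe_real_ereal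

lemma tendsto_coe_mul {c : ℕ → ℝ} {c₀ : ℝ} (hc : Tendsto c atTop (nhds c₀)) (hc₀ : c₀ ≠ 0)
    {G : ℕ → EReal} {M : EReal} (hG : Tendsto G atTop (nhds M)) :
    Tendsto (fun k => (c k : EReal) * G k) atTop (nhds ((c₀ : EReal) * M)) := by
  have hcont := EReal.continuousAt_mul (p := ((c₀ : ℝ), M))
    (Or.inl (EReal.coe_ne_zero.2 hc₀)) (Or.inl (EReal.coe_ne_zero.2 hc₀))
    (Or.inl (EReal.coe_ne_bot c₀)) (Or.inl (EReal.coe_ne_top c₀))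
  exact hcont.tendsto.comp ((EReal.tendsto_coe.2 hc).prodMk_nhds hG)

lemma limsup_coe_mul_le {c : ℕ → ℝ} {c₀ : ℝ} (hc : Tendsto c atTop (nhds c₀))
    (hcnn : ∀ k, 0 ≤ c k) (hc₀ : 0 < c₀) {G : ℕ → EReal} {M : EReal}
    (hM : limsup G atTop ≤ M) :
    limsup (fun k => (c k : EReal) * G k) atTop ≤ (c₀ : EReal) * M := by
  rcases eq_or_ne M ⊤ with rfl | hMtop
  · rw [EReal.mul_top_of_pos (by exact_mod_cast hc₀)]; exact le_top
  have key : ∀ r : ℝ, M < (r : EReal) →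
      limsup (fun k => (c k : EReal) * G k) atTop ≤ ((c₀ * r : ℝ) : EReal) := by
    intro r hr
    have hev : ∀ᶠ k in atTop, G k < (r : EReal) :=
      eventually_lt_of_limsup_lt (lt_of_le_of_lt hM hr)
    have hev2 : ∀ᶠ k in atTop, (c k : EReal) * G k ≤ ((c k * r : ℝ) : EReal) := by
      filter_upwards [hev] with k hk
      rw [EReal.coe_mul]
      exact mul_le_mul_of_nonneg_left hk.le (by exact_mod_cast hcnn k)
    have hlim : Tendsto (fun k => ((c k * r : ℝ) : EReal)) atTop (nhds ((c₀ * r : ℝ) : EReal)) :=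
      EReal.tendsto_coe.2 (hc.mul_const r)
    calc limsup (fun k => (c k : EReal) * G k) atTop
        ≤ limsup (fun k => ((c k * r : ℝ) : EReal)) atTop := limsup_le_limsup hev2
      _ = ((c₀ * r : ℝ) : EReal) := hlim.limsup_eq
  have h2 : ((c₀⁻¹ : ℝ) : EReal) * limsup (fun k => (c k : EReal) * G k) atTop ≤ M := by
    rw [← EReal.le_of_forall_lt_iff_le]
    intro z hz
    calc ((c₀⁻¹ : ℝ) : EReal) * limsup (fun k => (c k : EReal) * G k) atTop
        ≤ ((c₀⁻¹ : ℝ) : EReal) * ((c₀ * z : ℝ) : EReal) :=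
          mul_le_mul_of_nonneg_left (key z hz) (by exact_mod_cast (inv_nonneg.2 hc₀.le))
      _ = ((c₀⁻¹ * (c₀ * z) : ℝ) : EReal) := by rw [← EReal.coe_mul]
      _ = (z : EReal) := by norm_cast; field_simp
  calc limsup (fun k => (c k : EReal) * G k) atTop
      = (c₀ : EReal) * (((c₀⁻¹ : ℝ) : EReal) * limsup (fun k => (c k : EReal) * G k) atTop) := by
        rw [← mul_assoc, ← EReal.coe_mul, mul_inv_cancel₀ hc₀.ne', EReal.coe_one, one_mul]
    _ ≤ (c₀ : EReal) * M := mul_le_mul_of_nonneg_left h2 (by exact_mod_cast hc₀.le)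


/-- **Example 4.2 (wealth-dependent risk aversion).** Let `g = g_t : L̲⁰_{t+1} → L̲⁰_t` be
increasing, `𝓕ₜ`-concave, `𝓕ₜ`-translation invariant, sequentially upper semi-continuous
with `g 0 = 0`, and let `γ = γ_t : L⁰_t → L⁰_{t,++}` be `𝓕ₜ`-stable, decreasing and
sequentially continuous. Then `u(x,y) := γ(x)⁻¹ · g(γ(x)·y)` is increasing in both
components and sequentially upper semi-continuous; in particular along decreasing
sequences `x_k ↓ x`, `y_k ↓ y` one has `u(x_k,y_k) → u(x,y)` a.s. -/
theorem wealth_dependent_utility_props {Ω : Type*} {m : MeasurableSpace Ω}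
    {μ : Measure Ω} [IsProbabilityMeasure μ]
    (F F1 : MeasurableSpace Ω) (hFF1 : F ≤ F1) (hF1m : F1 ≤ m)
    (g : (Ω → EReal) → Ω → EReal)
    -- g maps L̲⁰_{t+1} into L̲⁰_t
    (hgL : ∀ y : Ω → EReal, Measurable[F1] y → (∀ᵐ ω ∂μ, y ω < ⊤) →
      Measurable[F] (g y) ∧ ∀ᵐ ω ∂μ, g y ω < ⊤)
    (hgae : ∀ y y' : Ω → EReal, y =ᵐ[μ] y' → g y =ᵐ[μ] g y')
    -- g increasing
    (hgmono : ∀ y y' : Ω → EReal, Measurable[F1] y → Measurable[F1] y' →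
      y ≤ᵐ[μ] y' → g y ≤ᵐ[μ] g y')
    -- g 𝓕ₜ-concave
    (hgconc : ∀ y y' : Ω → EReal, Measurable[F1] y → Measurable[F1] y' →
      ∀ lam : Ω → ℝ, Measurable[F] lam → (∀ᵐ ω ∂μ, 0 ≤ lam ω ∧ lam ω ≤ 1) →
      ∀ᵐ ω ∂μ, (lam ω : EReal) * g y ω + ((1 - lam ω : ℝ) : EReal) * g y' ω ≤
        g (fun ω' => (lam ω' : EReal) * y ω' + ((1 - lam ω' : ℝ) : EReal) * y' ω') ω)
    -- g 𝓕ₜ-translation invariant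
    (hgtrans : ∀ y : Ω → EReal, Measurable[F1] y → ∀ c : Ω → ℝ, Measurable[F] c →
      g (fun ω => y ω + (c ω : EReal)) =ᵐ[μ] fun ω => g y ω + (c ω : EReal))
    -- g sequentially upper semi-continuous
    (hgusc : ∀ (y : ℕ → Ω → EReal) (y₀ : Ω → EReal), (∀ k, Measurable[F1] (y k)) →
      Measurable[F1] y₀ → (∀ᵐ ω ∂μ, Tendsto (fun k => y k ω) atTop (nhds (y₀ ω))) →
      ∀ᵐ ω ∂μ, limsup (fun k => g (y k) ω) atTop ≤ g y₀ ω)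
    -- g 0 = 0
    (hg0 : g (fun _ => (0 : EReal)) =ᵐ[μ] fun _ => (0 : EReal))
    -- sensitivity to large losses (stated in the paper; listed here for completeness)
    (γ : (Ω → ℝ) → Ω → ℝ)
    -- γ maps L⁰_t into L⁰_{t,++}
    (hγL : ∀ x : Ω → ℝ, Measurable[F] x → Measurable[F] (γ x) ∧ ∀ᵐ ω ∂μ, 0 < γ x ω)
    (hγae : ∀ x x' : Ω → ℝ, x =ᵐ[μ] x' → γ x =ᵐ[μ] γ x')
    -- γ 𝓕ₜ-stable
    (hγstable : ∀ (A : ℕ → Set Ω), (∀ k, MeasurableSet[F] (A k)) →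
      (∀ i j, i ≠ j → μ (A i ∩ A j) = 0) → μ (⋃ k, A k)ᶜ = 0 →
      ∀ x : ℕ → Ω → ℝ, (∀ k, Measurable[F] (x k)) →
      ∀ x₀ : Ω → ℝ, Measurable[F] x₀ → (∀ k, ∀ᵐ ω ∂μ, ω ∈ A k → x₀ ω = x k ω) →
      ∀ k, ∀ᵐ ω ∂μ, ω ∈ A k → γ x₀ ω = γ (x k) ω)
    -- γ decreasing
    (hγanti : ∀ x x' : Ω → ℝ, Measurable[F] x → Measurable[F] x' →
      x ≤ᵐ[μ] x' → γ x' ≤ᵐ[μ] γ x)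
    -- γ sequentially continuous
    (hγcont : ∀ (x : ℕ → Ω → ℝ) (x₀ : Ω → ℝ), (∀ k, Measurable[F] (x k)) →
      Measurable[F] x₀ → (∀ᵐ ω ∂μ, Tendsto (fun k => x k ω) atTop (nhds (x₀ ω))) →
      ∀ᵐ ω ∂μ, Tendsto (fun k => γ (x k) ω) atTop (nhds (γ x₀ ω)))
    -- the wealth-dependent utility u(x,y) = (1/γ(x)) g(γ(x) y)
    (u : (Ω → ℝ) → (Ω → EReal) → Ω → EReal)
    (hu : ∀ x y, u x y = fun ω =>
      (((γ x ω)⁻¹ : ℝ) : EReal) * g (fun ω' => ((γ x ω' : ℝ) : EReal) * y ω') ω) :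
    -- (a) u is increasing in both components
    (∀ (x₁ x₂ : Ω → ℝ) (y₁ y₂ : Ω → EReal),
      Measurable[F] x₁ → Measurable[F] x₂ →
      Measurable[F1] y₁ → Measurable[F1] y₂ →
      (∀ᵐ ω ∂μ, y₁ ω < ⊤) → (∀ᵐ ω ∂μ, y₂ ω < ⊤) →
      x₁ ≤ᵐ[μ] x₂ → y₁ ≤ᵐ[μ] y₂ → u x₁ y₁ ≤ᵐ[μ] u x₂ y₂) ∧
    -- (b) u is sequentially upper semi-continuous
    (∀ (x : ℕ → Ω → ℝ) (x₀ : Ω → ℝ) (y : ℕ → Ω → EReal) (y₀ : Ω → EReal),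
      (∀ k, Measurable[F] (x k)) → Measurable[F] x₀ →
      (∀ k, Measurable[F1] (y k)) → Measurable[F1] y₀ →
      (∀ k, ∀ᵐ ω ∂μ, y k ω < ⊤) → (∀ᵐ ω ∂μ, y₀ ω < ⊤) →
      (∀ᵐ ω ∂μ, Tendsto (fun k => x k ω) atTop (nhds (x₀ ω))) →
      (∀ᵐ ω ∂μ, Tendsto (fun k => y k ω) atTop (nhds (y₀ ω))) →
      (∀ᵐ ω ∂μ, limsup (fun k => u (x k) (y k) ω) atTop ≤ u x₀ y₀ ω) ∧
      -- in particular, along decreasing sequences the limit is attained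
      ((∀ k, x (k + 1) ≤ᵐ[μ] x k) → (∀ k, y (k + 1) ≤ᵐ[μ] y k) →
        ∀ᵐ ω ∂μ, Tendsto (fun k => u (x k) (y k) ω) atTop (nhds (u x₀ y₀ ω)))) := by
  have amono : ∀ (x₁ x₂ : Ω → ℝ) (y₁ y₂ : Ω → EReal),
      Measurable[F] x₁ → Measurable[F] x₂ →
      Measurable[F1] y₁ → Measurable[F1] y₂ →
      (∀ᵐ ω ∂μ, y₁ ω < ⊤) → (∀ᵐ ω ∂μ, y₂ ω < ⊤) →
      x₁ ≤ᵐ[μ] x₂ → y₁ ≤ᵐ[μ] y₂ → u x₁ y₁ ≤ᵐ[μ] u x₂ y₂ := by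
    intro x₁ x₂ y₁ y₂ hx₁ hx₂ hy₁ hy₂ hy₁top hy₂top hxle hyle
    have hb := hγL x₁ hx₁
    have ha := hγL x₂ hx₂
    have hab : γ x₂ ≤ᵐ[μ] γ x₁ := hγanti x₁ x₂ hx₁ hx₂ hxle
    have hAy₁ : Measurable[F1] (fun ω' => ((γ x₂ ω' : ℝ) : EReal) * y₁ ω') :=
      measurable_coe_mul (ha.1.mono hFF1 le_rfl) hy₁
    have hAy₂ : Measurable[F1] (fun ω' => ((γ x₂ ω' : ℝ) : EReal) * y₂ ω') :=
      measurable_coe_mul (ha.1.mono hFF1 le_rfl) hy₂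
    have hBy₁ : Measurable[F1] (fun ω' => ((γ x₁ ω' : ℝ) : EReal) * y₁ ω') :=
      measurable_coe_mul (hb.1.mono hFF1 le_rfl) hy₁
    -- monotonicity in y
    have hstep1 : g (fun ω' => ((γ x₂ ω' : ℝ) : EReal) * y₁ ω') ≤ᵐ[μ]
        g (fun ω' => ((γ x₂ ω' : ℝ) : EReal) * y₂ ω') := by
      refine hgmono _ _ hAy₁ hAy₂ ?_
      filter_upwards [hyle, ha.2] with ω h1 h2
      exact mul_le_mul_of_nonneg_left h1 (by exact_mod_cast h2.le)
    -- monotonicity in x via concavity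
    have hlammeas : Measurable[F] (fun ω => γ x₂ ω / γ x₁ ω) := ha.1.div hb.1
    have hlambd : ∀ᵐ ω ∂μ, 0 ≤ γ x₂ ω / γ x₁ ω ∧ γ x₂ ω / γ x₁ ω ≤ 1 := by
      filter_upwards [hb.2, ha.2, hab] with ω h1 h2 h3
      exact ⟨div_nonneg h2.le h1.le, (div_le_one h1).2 h3⟩
    have hconc := hgconc (fun ω' => ((γ x₁ ω' : ℝ) : EReal) * y₁ ω') (fun _ => (0 : EReal))
      hBy₁ measurable_const (fun ω => γ x₂ ω / γ x₁ ω) hlammeas hlambd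
    have he : (fun ω' => ((γ x₂ ω' / γ x₁ ω' : ℝ) : EReal) * (((γ x₁ ω' : ℝ) : EReal) * y₁ ω')
        + ((1 - γ x₂ ω' / γ x₁ ω' : ℝ) : EReal) * (0 : EReal)) =ᵐ[μ]
        (fun ω' => ((γ x₂ ω' : ℝ) : EReal) * y₁ ω') := by
      filter_upwards [hb.2] with ω h1
      rw [mul_zero, add_zero, ← mul_assoc, ← EReal.coe_mul, div_mul_cancel₀ _ h1.ne']
    have hstep2 : ∀ᵐ ω ∂μ, ((γ x₂ ω / γ x₁ ω : ℝ) : EReal) *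
        g (fun ω' => ((γ x₁ ω' : ℝ) : EReal) * y₁ ω') ω ≤
        g (fun ω' => ((γ x₂ ω' : ℝ) : EReal) * y₁ ω') ω := by
      filter_upwards [hconc, hgae _ _ he, hg0] with ω h1 h2 h3
      rw [h3, mul_zero, add_zero] at h1
      exact h1.trans_eq h2
    rw [hu x₁ y₁, hu x₂ y₂]
    filter_upwards [hstep1, hstep2, hb.2, ha.2] with ω h1 h2 hbω haω
    have hreal : (γ x₁ ω)⁻¹ = (γ x₂ ω)⁻¹ * (γ x₂ ω / γ x₁ ω) := by
      rw [div_eq_mul_inv, ← mul_assoc, inv_mul_cancel₀ haω.ne', one_mul]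
    calc (((γ x₁ ω)⁻¹ : ℝ) : EReal) * g (fun ω' => ((γ x₁ ω' : ℝ) : EReal) * y₁ ω') ω
        = (((γ x₂ ω)⁻¹ : ℝ) : EReal) * (((γ x₂ ω / γ x₁ ω : ℝ) : EReal) *
            g (fun ω' => ((γ x₁ ω' : ℝ) : EReal) * y₁ ω') ω) := by
          rw [hreal, EReal.coe_mul, mul_assoc]
      _ ≤ (((γ x₂ ω)⁻¹ : ℝ) : EReal) * g (fun ω' => ((γ x₂ ω' : ℝ) : EReal) * y₁ ω') ω :=
          mul_le_mul_of_nonneg_left h2 (by exact_mod_cast inv_nonneg.2 haω.le)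
      _ ≤ (((γ x₂ ω)⁻¹ : ℝ) : EReal) * g (fun ω' => ((γ x₂ ω' : ℝ) : EReal) * y₂ ω') ω :=
          mul_le_mul_of_nonneg_left h1 (by exact_mod_cast inv_nonneg.2 haω.le)
  refine ⟨amono, ?_⟩
  intro x x₀ y y₀ hx hx₀ hy hy₀ hytop hy₀top hxconv hyconv
  have hzmeas : ∀ k, Measurable[F1] (fun ω' => ((γ (x k) ω' : ℝ) : EReal) * y k ω') :=
    fun k => measurable_coe_mul ((hγL (x k) (hx k)).1.mono hFF1 le_rfl) (hy k)
  have hz₀meas : Measurable[F1] (fun ω' => ((γ x₀ ω' : ℝ) : EReal) * y₀ ω') :=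
    measurable_coe_mul ((hγL x₀ hx₀).1.mono hFF1 le_rfl) hy₀
  have hγconv := hγcont x x₀ hx hx₀ hxconv
  have hγpos : ∀ᵐ ω ∂μ, ∀ k, 0 < γ (x k) ω := ae_all_iff.2 fun k => (hγL (x k) (hx k)).2
  have hγ₀pos := (hγL x₀ hx₀).2
  have hzconv : ∀ᵐ ω ∂μ, Tendsto (fun k => ((γ (x k) ω : ℝ) : EReal) * y k ω) atTop
      (nhds (((γ x₀ ω : ℝ) : EReal) * y₀ ω)) := by
    filter_upwards [hγconv, hγ₀pos, hyconv] with ω h1 h2 h3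
    exact tendsto_coe_mul h1 h2.ne' h3
  have husc := hgusc (fun k ω' => ((γ (x k) ω' : ℝ) : EReal) * y k ω')
    (fun ω' => ((γ x₀ ω' : ℝ) : EReal) * y₀ ω') hzmeas hz₀meas hzconv
  have main : ∀ᵐ ω ∂μ, limsup (fun k => u (x k) (y k) ω) atTop ≤ u x₀ y₀ ω := by
    filter_upwards [husc, hγpos, hγ₀pos, hγconv] with ω h1 h2 h3 h4
    simp only [hu]
    exact limsup_coe_mul_le (h4.inv₀ h3.ne') (fun k => inv_nonneg.2 (h2 k).le)
      (inv_pos.2 h3) h1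
  refine ⟨main, ?_⟩
  intro hxdec hydec
  have hxk : ∀ᵐ ω ∂μ, ∀ k, x₀ ω ≤ x k ω := by
    filter_upwards [ae_all_iff.2 hxdec, hxconv] with ω hd hc k
    have hanti : Antitone fun j => x j ω := antitone_nat_of_succ_le fun j => hd j
    exact le_of_tendsto hc (eventually_atTop.2 ⟨k, fun j hj => hanti hj⟩)
  have hyk : ∀ᵐ ω ∂μ, ∀ k, y₀ ω ≤ y k ω := by
    filter_upwards [ae_all_iff.2 hydec, hyconv] with ω hd hc k
    have hanti : Antitone fun j => y j ω := antitone_nat_of_succ_le fun j => hd j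
    exact le_of_tendsto hc (eventually_atTop.2 ⟨k, fun j hj => hanti hj⟩)
  have hlow : ∀ᵐ ω ∂μ, ∀ k, u x₀ y₀ ω ≤ u (x k) (y k) ω :=
    ae_all_iff.2 fun k => amono x₀ (x k) y₀ (y k) hx₀ (hx k) hy₀ (hy k) hy₀top (hytop k)
      (hxk.mono fun ω h => h k) (hyk.mono fun ω h => h k)
  filter_upwards [main, hlow] with ω h1 h2
  exact tendsto_of_le_liminf_of_limsup_le
    (le_liminf_of_le (by isBoundedDefault) (Eventually.of_forall h2)) h1


end CondPaper
end
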